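/- arXiv:2011.13830 — 10 statements merged into one kernel-verified Lean document; each statement's English description precedes it below -/
import Mathlib

section
/- Let r be a polymatroid on [n] of rank d and let S ⊆ [n] with |S| ≥ 2. Then S is r̄-inseparable if and only if S contains no loop of r. -/
/-!
A loop `x ∈ S` has `r̄ {x} = 0`, so by monotonicity the split of `S` into `{x}` and `S \ {x}`
violates inseparability. Conversely, if `S = S₁ ⊔ S₂` with both parts loop-free, subadditivity of
`r` gives `min (d - k) (r S) ≤ min (d - k) (r S₁) + min (d - k) (r S₂)` for every `k`, and the term
`k = d - 1` is strict: its left side is at most `1` while `r S₁, r S₂ ≥ 1` make the right side `2`.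
-/

/-- A polymatroid on `[n]`: a nonnegative-integer-valued function on subsets of `[n]`
that vanishes on the empty set, is monotone under inclusion, and is submodular. -/
def IsPolymatroid {n : ℕ} (r : Finset (Fin n) → ℕ) : Prop :=
  r ∅ = 0 ∧ (∀ S T, S ⊆ T → r S ≤ r T) ∧
    ∀ S T, r (S ∪ T) + r (S ∩ T) ≤ r S + r T

/-- `S` is `r`-inseparable: for every pair of disjoint nonempty sets `S₁, S₂` with
`S = S₁ ∪ S₂` one has `r S < r S₁ + r S₂`. -/
def IsInseparable {n : ℕ} (r : Finset (Fin n) → ℕ) (S : Finset (Fin n)) : Prop :=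
  ∀ S₁ S₂ : Finset (Fin n), S₁.Nonempty → S₂.Nonempty → Disjoint S₁ S₂ →
    S₁ ∪ S₂ = S → r S < r S₁ + r S₂

/-- `r̄ = r_0 + r_1 + ⋯ + r_d`, where `r_k S = min (d - k) (r S)` is the `k`-th
truncation of a polymatroid `r` of rank `d`. -/
def polymatroidBar {n : ℕ} (r : Finset (Fin n) → ℕ) (d : ℕ) (S : Finset (Fin n)) : ℕ :=
  ∑ k ∈ Finset.range (d + 1), min (d - k) (r S)

namespace IsPolymatroid

variable {n : ℕ} {r : Finset (Fin n) → ℕ}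

theorem mono (hr : IsPolymatroid r) {S T : Finset (Fin n)} (h : S ⊆ T) : r S ≤ r T :=
  hr.2.1 S T h

theorem union_le_add_of_disjoint (hr : IsPolymatroid r) {S T : Finset (Fin n)}
    (h : Disjoint S T) : r (S ∪ T) ≤ r S + r T := by
  have hsub := hr.2.2 S T
  rwa [Finset.disjoint_iff_inter_eq_empty.mp h, hr.1, add_zero] at hsub

theorem pos_of_mem (hr : IsPolymatroid r) {S : Finset (Fin n)} {x : Fin n} (hx : x ∈ S)
    (hloop : r {x} ≠ 0) : 0 < r S :=
  (Nat.pos_of_ne_zero hloop).trans_le (hr.mono (Finset.singleton_subset_iff.mpr hx))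

end IsPolymatroid

section polymatroidBar

variable {n : ℕ} {r : Finset (Fin n) → ℕ} {d : ℕ}

theorem polymatroidBar_eq_zero {S : Finset (Fin n)} (h : r S = 0) : polymatroidBar r d S = 0 := by
  simp [polymatroidBar, h]

theorem polymatroidBar_le {S T : Finset (Fin n)} (h : r S ≤ r T) :
    polymatroidBar r d S ≤ polymatroidBar r d T :=
  Finset.sum_le_sum fun _ _ => min_le_min le_rfl h

theorem polymatroidBar_lt_add {S S₁ S₂ : Finset (Fin n)} (hd : 1 ≤ d) (h₁ : 0 < r S₁)
    (h₂ : 0 < r S₂) (h : r S ≤ r S₁ + r S₂) :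
    polymatroidBar r d S < polymatroidBar r d S₁ + polymatroidBar r d S₂ := by
  rw [polymatroidBar, polymatroidBar, polymatroidBar, ← Finset.sum_add_distrib]
  refine Finset.sum_lt_sum (fun k _ => by omega) ⟨d - 1, Finset.mem_range.mpr (by omega), ?_⟩
  omega

end polymatroidBar

theorem IsInseparable.ne_zero_of_mem {n : ℕ} {f : Finset (Fin n) → ℕ}
    (hf : ∀ S T, S ⊆ T → f S ≤ f T) {S : Finset (Fin n)} (h : IsInseparable f S)
    (hS : 2 ≤ S.card) {x : Fin n} (hx : x ∈ S) : f {x} ≠ 0 := by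
  have hrest : (S.erase x).Nonempty := by
    rw [← Finset.card_pos, Finset.card_erase_of_mem hx]
    omega
  have hsplit : {x} ∪ S.erase x = S := by rw [← Finset.insert_eq, Finset.insert_erase hx]
  have hlt := h {x} (S.erase x) (Finset.singleton_nonempty x) hrest
    (Finset.disjoint_singleton_left.mpr (Finset.notMem_erase x S)) hsplit
  have hle := hf _ _ (Finset.erase_subset x S)
  omega

/-- For a polymatroid `r` of rank `d` and `S` with `|S| ≥ 2`, the set `S` is
`r̄`-inseparable if and only if `S` contains no loop of `r`. -/
theorem inseparable_bar_iff_no_loop {n : ℕ} (r : Finset (Fin n) → ℕ)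
    (hr : IsPolymatroid r) (d : ℕ) (hd : r Finset.univ = d)
    (S : Finset (Fin n)) (hS : 2 ≤ S.card) :
    IsInseparable (polymatroidBar r d) S ↔ ∀ x ∈ S, r {x} ≠ 0 := by
  constructor
  · intro h x hx hloop
    exact h.ne_zero_of_mem (fun _ _ hST => polymatroidBar_le (hr.mono hST)) hS hx
      (polymatroidBar_eq_zero hloop)
  · rintro hnl S₁ S₂ ⟨x, hx⟩ ⟨y, hy⟩ hdisj rfl
    have h₁ : 0 < r S₁ := hr.pos_of_mem hx (hnl x (Finset.mem_union_left _ hx))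
    have h₂ : 0 < r S₂ := hr.pos_of_mem hy (hnl y (Finset.mem_union_right _ hy))
    have hd₁ : 1 ≤ d := hd ▸ h₁.trans_le (hr.mono (Finset.subset_univ S₁))
    exact polymatroidBar_lt_add hd₁ h₁ h₂ (hr.union_le_add_of_disjoint hdisj)
end

section
/- Let r be a polymatroid on [n] of rank d. Let S, T ⊆ [n] be such that (1) S∩T ≠ ∅, S ⊄ T and T ⊄ S; (2) r̄(S∩T) < r̄(S) and r̄(S∩T) < r̄(T); and (3) the sets S, T and S∪T are all r̄-inseparable. Then r̄(S∩T) + r̄(S∪T) < r̄(S) + r̄(T). -/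
/-!
`r̄ S` depends on `S` only through `r S`: it is `φ (r S)` with `φ m = ∑_{k ≤ d} min (d - k) m`.
The increments `φ (m + 1) - φ m = d - m` decrease strictly as long as they are positive, so `φ`
is nondecreasing and strictly concave below `d`. The hypotheses `r̄(S∩T) < r̄(S), r̄(T)` force
`r(S∩T) < r(S), r(T)` and `r(S∩T) < d`, and then submodularity of `r` together with strict
concavity of `φ` gives the strict inequality.
-/

/-- The profile `φ` with `polymatroidBar r d S = truncationSum d (r S)`. -/
def truncationSum (d m : ℕ) : ℕ :=
  ∑ k ∈ Finset.range (d + 1), min (d - k) m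

namespace truncationSum

theorem monotone (d : ℕ) : Monotone (truncationSum d) :=
  fun _ _ h => Finset.sum_le_sum fun _ _ => min_le_min le_rfl h

theorem le_self (d m : ℕ) : truncationSum d m ≤ truncationSum d d :=
  Finset.sum_le_sum fun k _ => by omega

theorem eq_self_of_le {d m : ℕ} (h : d ≤ m) : truncationSum d m = truncationSum d d :=
  Finset.sum_congr rfl fun k _ => by omega

theorem succ_left (d m : ℕ) :
    truncationSum (d + 1) m = truncationSum d m + min (d + 1) m := by
  simp only [truncationSum, Finset.sum_range_succ' _ (d + 1), Nat.add_sub_add_right,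
    Nat.sub_zero]

theorem succ_right (d m : ℕ) : truncationSum d (m + 1) = truncationSum d m + (d - m) := by
  induction d with
  | zero => simp [truncationSum]
  | succ d ih =>
    rw [succ_left, succ_left, ih]
    omega

/-- Discrete concavity: increments over a window of length `j` shrink as the window moves right. -/
theorem add_add_le_add_add {d b c : ℕ} (hcb : c ≤ b) (j : ℕ) :
    truncationSum d (b + j) + truncationSum d c ≤ truncationSum d (c + j) + truncationSum d b := by
  induction j with
  | zero => simp [add_comm]
  | succ j ih =>
    rw [← add_assoc, ← add_assoc, succ_right, succ_right]
    omega

theorem add_add_lt_add_add {d b c j : ℕ} (hcb : c < b) (hcd : c < d) (hj : 0 < j) :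
    truncationSum d (b + j) + truncationSum d c < truncationSum d (c + j) + truncationSum d b := by
  obtain ⟨j, rfl⟩ := Nat.exists_eq_add_of_lt hj
  have h := add_add_le_add_add (d := d) (b := b + 1) (c := c + 1) (by omega) j
  rw [show b + (0 + j + 1) = b + 1 + j by omega, show c + (0 + j + 1) = c + 1 + j by omega]
  rw [succ_right d b, succ_right d c] at h
  omega

theorem add_lt_add_of_lt_of_add_le {d a s t u : ℕ} (hs : truncationSum d a < truncationSum d s)
    (ht : truncationSum d a < truncationSum d t) (hu : u + a ≤ s + t) :
    truncationSum d a + truncationSum d u < truncationSum d s + truncationSum d t := by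
  have has : a < s := (monotone d).reflect_lt hs
  have hat : a < t := (monotone d).reflect_lt ht
  have had : a < d := by
    by_contra! h
    exact (le_self d s).not_gt (eq_self_of_le h ▸ hs)
  have hu' : truncationSum d u ≤ truncationSum d (s + (t - a)) := monotone d (by omega)
  have hconc := add_add_lt_add_add (d := d) has had (Nat.sub_pos_of_lt hat)
  rw [Nat.add_sub_cancel' hat.le] at hconc
  omega

end truncationSum

theorem bar_strict_submodularity_general {n : ℕ} (r : Finset (Fin n) → ℕ)
    (hr : IsPolymatroid r) (d : ℕ)
    (S T : Finset (Fin n))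
    (h4 : polymatroidBar r d (S ∩ T) < polymatroidBar r d S)
    (h5 : polymatroidBar r d (S ∩ T) < polymatroidBar r d T) :
    polymatroidBar r d (S ∩ T) + polymatroidBar r d (S ∪ T) <
      polymatroidBar r d S + polymatroidBar r d T :=
  truncationSum.add_lt_add_of_lt_of_add_le h4 h5 (hr.2.2 S T)

/-- Let `r` be a polymatroid of rank `d` and `S, T` subsets such that
(1) `S ∩ T ≠ ∅`, `S ⊄ T`, `T ⊄ S`; (2) `r̄(S∩T) < r̄(S)` and `r̄(S∩T) < r̄(T)`;
(3) `S`, `T` and `S ∪ T` are `r̄`-inseparable.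
Then `r̄(S∩T) + r̄(S∪T) < r̄(S) + r̄(T)`. -/
theorem bar_strict_submodularity {n : ℕ} (r : Finset (Fin n) → ℕ)
    (hr : IsPolymatroid r) (d : ℕ) (hd : r Finset.univ = d)
    (S T : Finset (Fin n))
    (h1 : (S ∩ T).Nonempty) (h2 : ¬ S ⊆ T) (h3 : ¬ T ⊆ S)
    (h4 : polymatroidBar r d (S ∩ T) < polymatroidBar r d S)
    (h5 : polymatroidBar r d (S ∩ T) < polymatroidBar r d T)
    (h6 : IsInseparable (polymatroidBar r d) S)
    (h7 : IsInseparable (polymatroidBar r d) T)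
    (h8 : IsInseparable (polymatroidBar r d) (S ∪ T)) :
    polymatroidBar r d (S ∩ T) + polymatroidBar r d (S ∪ T) <
      polymatroidBar r d S + polymatroidBar r d T :=
  bar_strict_submodularity_general r hr d S T h4 h5
end

section
/- Let r be a polymatroid on [n] of rank d. Let k ≥ 2 and let S₁, …, S_k ⊆ [n] be nonempty and pairwise disjoint. Let S ⊆ [n] be r̄-inseparable with S₁ ∪ ⋯ ∪ S_k ⊆ S and r̄(S₁ ∪ ⋯ ∪ S_k) = r̄(S). Then r̄(S₁ ∪ ⋯ ∪ S_k) < r̄(S₁) + ⋯ + r̄(S_k). -/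
lemma IsInseparable.pos_of_ssubset {n : ℕ} {f : Finset (Fin n) → ℕ} {S A : Finset (Fin n)}
    (hS : IsInseparable f S) (hf : Monotone f) (hA : A.Nonempty) (hAS : A ⊂ S) : 0 < f A := by
  have hlt := hS A (S \ A) hA (Finset.sdiff_nonempty.2 hAS.2) Finset.disjoint_sdiff
    (Finset.union_sdiff_of_subset hAS.1)
  have hle : f (S \ A) ≤ f S := hf Finset.sdiff_subset
  omega

section

variable {n : ℕ} {r : Finset (Fin n) → ℕ} (d : ℕ)

lemma polymatroidBar_pos_iff {A : Finset (Fin n)} :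
    0 < polymatroidBar r d A ↔ 0 < d ∧ 0 < r A := by
  simp only [polymatroidBar, Finset.sum_pos_iff, Finset.mem_range, lt_min_iff]
  constructor
  · rintro ⟨k, -, hk, hA⟩
    exact ⟨by omega, hA⟩
  · rintro ⟨hd, hA⟩
    exact ⟨0, by omega, by omega, hA⟩

lemma polymatroidBar_union_le {A B : Finset (Fin n)} (h : r (A ∪ B) ≤ r A + r B) :
    polymatroidBar r d (A ∪ B) ≤ polymatroidBar r d A + polymatroidBar r d B := by
  rw [polymatroidBar, polymatroidBar, polymatroidBar, ← Finset.sum_add_distrib]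
  exact Finset.sum_le_sum fun k _ => by omega

/-- The strict inequality comes from the truncation `r_{d-1} = min 1 r`. -/
lemma polymatroidBar_union_lt {A B : Finset (Fin n)} (h : r (A ∪ B) ≤ r A + r B)
    (hd : 0 < d) (hA : 0 < r A) (hB : 0 < r B) :
    polymatroidBar r d (A ∪ B) < polymatroidBar r d A + polymatroidBar r d B := by
  rw [polymatroidBar, polymatroidBar, polymatroidBar, ← Finset.sum_add_distrib]
  refine Finset.sum_lt_sum (fun k _ => by omega) ⟨d - 1, Finset.mem_range.2 (by omega), ?_⟩
  omega

end

namespace IsPolymatroid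

variable {n : ℕ} {r : Finset (Fin n) → ℕ}

lemma union_le (hr : IsPolymatroid r) (A B : Finset (Fin n)) : r (A ∪ B) ≤ r A + r B :=
  (Nat.le_add_right _ _).trans (hr.2.2 A B)

lemma polymatroidBar_monotone (hr : IsPolymatroid r) (d : ℕ) : Monotone (polymatroidBar r d) :=
  fun _ _ h => Finset.sum_le_sum fun _ _ => min_le_min_left _ (hr.2.1 _ _ h)

lemma polymatroidBar_biUnion_le (hr : IsPolymatroid r) (d : ℕ) {ι : Type*} [DecidableEq ι]
    (T : Finset ι) (Si : ι → Finset (Fin n)) :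
    polymatroidBar r d (T.biUnion Si) ≤ ∑ i ∈ T, polymatroidBar r d (Si i) := by
  induction T using Finset.induction_on with
  | empty => simp [polymatroidBar, hr.1]
  | insert a T ha ih =>
    rw [Finset.biUnion_insert, Finset.sum_insert ha]
    exact (polymatroidBar_union_le d (hr.union_le _ _)).trans (by omega)

lemma polymatroidBar_biUnion_lt (hr : IsPolymatroid r) (d : ℕ) {ι : Type*} [DecidableEq ι]
    {T : Finset ι} {Si : ι → Finset (Fin n)} {i j : ι} (hi : i ∈ T) (hj : j ∈ T)
    (hij : i ≠ j) (hd : 0 < d) (hri : 0 < r (Si i)) (hrj : 0 < r (Si j)) :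
    polymatroidBar r d (T.biUnion Si) < ∑ i ∈ T, polymatroidBar r d (Si i) := by
  have hj' : j ∈ T.erase i := Finset.mem_erase.2 ⟨hij.symm, hj⟩
  have hrest : 0 < r ((T.erase i).biUnion Si) :=
    hrj.trans_le (hr.2.1 _ _ (Finset.subset_biUnion_of_mem Si hj'))
  rw [← Finset.insert_erase hi, Finset.biUnion_insert,
    Finset.sum_insert (Finset.notMem_erase i T)]
  calc polymatroidBar r d (Si i ∪ (T.erase i).biUnion Si)
      < polymatroidBar r d (Si i) + polymatroidBar r d ((T.erase i).biUnion Si) :=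
        polymatroidBar_union_lt d (hr.union_le _ _) hd hri hrest
    _ ≤ _ := Nat.add_le_add_left (hr.polymatroidBar_biUnion_le d _ Si) _

end IsPolymatroid

theorem bar_union_lt_sum_general {n : ℕ} (r : Finset (Fin n) → ℕ)
    (hr : IsPolymatroid r) (d : ℕ)
    (k : ℕ) (hk : 2 ≤ k) (Si : Fin k → Finset (Fin n))
    (hne : ∀ i, (Si i).Nonempty)
    (hdisj : ∀ i j, i ≠ j → Disjoint (Si i) (Si j))
    (S : Finset (Fin n))
    (hins : IsInseparable (polymatroidBar r d) S)
    (hsub : Finset.univ.biUnion Si ⊆ S) :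
    polymatroidBar r d (Finset.univ.biUnion Si) < ∑ i, polymatroidBar r d (Si i) := by
  have hSi : ∀ i, Si i ⊆ S := fun i =>
    (Finset.subset_biUnion_of_mem Si (Finset.mem_univ i)).trans hsub
  have hpos : ∀ i j, i ≠ j → 0 < d ∧ 0 < r (Si i) := by
    intro i j hij
    obtain ⟨x, hx⟩ := hne j
    have hssub : Si i ⊂ S := ⟨hSi i, fun hS =>
      Finset.disjoint_left.1 (hdisj j i hij.symm) hx (hS (hSi j hx))⟩
    exact (polymatroidBar_pos_iff d).1 <|
      hins.pos_of_ssubset (hr.polymatroidBar_monotone d) (hne i) hssub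
  have h01 : (⟨0, by omega⟩ : Fin k) ≠ ⟨1, by omega⟩ := by simp
  obtain ⟨hd, h0⟩ := hpos _ _ h01
  exact hr.polymatroidBar_biUnion_lt d (Finset.mem_univ _) (Finset.mem_univ _) h01 hd h0
    (hpos _ _ h01.symm).2

/-- Let `r` be a polymatroid of rank `d`, `k ≥ 2`, and `S₁, …, S_k` nonempty pairwise
disjoint subsets of `[n]`. Let `S` be `r̄`-inseparable with `S₁ ∪ ⋯ ∪ S_k ⊆ S` and
`r̄(S₁ ∪ ⋯ ∪ S_k) = r̄(S)`. Then `r̄(S₁ ∪ ⋯ ∪ S_k) < r̄(S₁) + ⋯ + r̄(S_k)`. -/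
theorem bar_union_lt_sum {n : ℕ} (r : Finset (Fin n) → ℕ)
    (hr : IsPolymatroid r) (d : ℕ) (hd : r Finset.univ = d)
    (k : ℕ) (hk : 2 ≤ k) (Si : Fin k → Finset (Fin n))
    (hne : ∀ i, (Si i).Nonempty)
    (hdisj : ∀ i j, i ≠ j → Disjoint (Si i) (Si j))
    (S : Finset (Fin n))
    (hins : IsInseparable (polymatroidBar r d) S)
    (hsub : Finset.univ.biUnion Si ⊆ S)
    (heq : polymatroidBar r d (Finset.univ.biUnion Si) = polymatroidBar r d S) :
    polymatroidBar r d (Finset.univ.biUnion Si) < ∑ i, polymatroidBar r d (Si i) :=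
  bar_union_lt_sum_general r hr d k hk Si hne hdisj S hins hsub
end

section
/- Let r be the rank function of a matroid M of rank d on [n]. The vertices (extreme points) of the polytope B(r̄) ⊆ ℝ^n are exactly those points v ∈ ℝ^n whose support {i ∈ [n] : vᵢ ≠ 0} is a basis of M and whose nonzero entries comprise exactly the numbers 1, 2, …, d (each occurring once). -/
/-!
The set function `r̄ S = g (r S)`, with `g m = ∑_{k ≤ d} min (d - k) m`, is submodular because `g`
is concave and nondecreasing, so the sets on which a point `v` of `B(r̄)` is tight form a lattice.
At a vertex `v` the tight sets separate any two points of the support (otherwise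
`v ± ε (e_i - e_j)` stays in the polytope), so there is a chain of tight sets
`∅ = C₀ ⊂ C₁ ⊂ ⋯` exhausting the support and growing by one element at a time. As `v` is positive
on its support, the rank increases at every step, and the new coordinate is
`g (t + 1) - g t = d - t`. Conversely, if the support of `v` is a basis carrying the values
`1, …, d`, the level sets `{i | m ≤ v i}` are tight and determine `v`, and `v ∈ B(r̄)` because
`c` distinct numbers from `{1, …, d}` sum to at most `g c`.
-/

/-- The rank function of an independence system: `r S` is the maximum cardinality of an
independent subset of `S`. -/
def matroidRank {n : ℕ} (Indep : Finset (Fin n) → Prop) [DecidablePred Indep]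
    (S : Finset (Fin n)) : ℕ :=
  (S.powerset.filter Indep).sup Finset.card

/-- The base polytope of an integer-valued set function `f` on subsets of `[n]`:
all nonnegative `x ∈ ℝⁿ` with `∑_{i ∈ S} x_i ≤ f S` for all `S` and `∑ x_i = f [n]`. -/
def basePolytope {n : ℕ} (f : Finset (Fin n) → ℕ) : Set (Fin n → ℝ) :=
  {x | (∀ i, 0 ≤ x i) ∧ (∀ S : Finset (Fin n), ∑ i ∈ S, x i ≤ (f S : ℝ)) ∧
    ∑ i, x i = (f Finset.univ : ℝ)}

open Finset Filter Topology

def truncSum (d m : ℕ) : ℕ := ∑ k ∈ range (d + 1), min (d - k) m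

lemma polymatroidBar_eq_truncSum {n : ℕ} (r : Finset (Fin n) → ℕ) (d : ℕ) (S : Finset (Fin n)) :
    polymatroidBar r d S = truncSum d (r S) := rfl

namespace truncSum

lemma zero_right (d : ℕ) : truncSum d 0 = 0 := by simp [truncSum]

lemma mono (d : ℕ) : Monotone (truncSum d) := fun _ _ h =>
  sum_le_sum fun _ _ => min_le_min_left _ h

lemma succ_right {d m : ℕ} (h : m < d) : truncSum d (m + 1) = truncSum d m + (d - m) := by
  have hterm : ∀ k ∈ range (d + 1),
      min (d - k) (m + 1) = min (d - k) m + if k < d - m then 1 else 0 := by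
    intro k _
    split_ifs <;> omega
  have hcount : (range (d + 1)).filter (· < d - m) = range (d - m) := by
    ext k; simp only [mem_filter, mem_range]; omega
  rw [truncSum, sum_congr rfl hterm, sum_add_distrib, sum_boole, hcount, card_range]
  rfl

lemma succ_succ (d m : ℕ) : truncSum (d + 1) (m + 1) = truncSum d m + (d + 1) := by
  have hterm : ∀ k ∈ range (d + 1), min (d + 1 - k) (m + 1) = min (d - k) m + 1 := by
    intro k hk
    rw [mem_range] at hk
    omega
  rw [truncSum, sum_range_succ, Nat.sub_self, Nat.zero_min, add_zero, sum_congr rfl hterm,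
    sum_add_distrib, sum_const, card_range, smul_eq_mul, mul_one]
  rfl

lemma le_succ_left (d m : ℕ) : truncSum d m ≤ truncSum (d + 1) m :=
  calc truncSum d m ≤ ∑ k ∈ range (d + 1), min (d + 1 - k) m :=
        sum_le_sum fun _ _ => min_le_min_right _ (by omega)
    _ ≤ truncSum (d + 1) m := sum_le_sum_of_subset (range_subset_range.2 (by omega))

lemma lt_truncSum_self {d m : ℕ} (h : m < d) : truncSum d m < truncSum d d :=
  calc truncSum d m < truncSum d (m + 1) := by rw [succ_right h]; omega
    _ ≤ truncSum d d := mono d h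

lemma add_le_add_of_add_le {d u a s t : ℕ} (has : a ≤ s) (hat : a ≤ t) (hsu : s ≤ u) (htu : t ≤ u)
    (h : u + a ≤ s + t) : truncSum d u + truncSum d a ≤ truncSum d s + truncSum d t := by
  simp only [truncSum, ← sum_add_distrib]
  exact sum_le_sum fun _ _ => by omega

end truncSum

lemma sum_Icc_eq_truncSum {m : ℕ} (hm : 1 ≤ m) :
    ∀ d, ∑ j ∈ Icc m d, j = truncSum d (d + 1 - m)
  | 0 => by
    rw [Icc_eq_empty (by omega), sum_empty, show 0 + 1 - m = 0 by omega, truncSum.zero_right]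
  | d + 1 => by
    by_cases hmd : m ≤ d + 1
    · rw [sum_Icc_succ_top hmd, sum_Icc_eq_truncSum hm d,
        show d + 1 + 1 - m = d + 1 - m + 1 by omega, truncSum.succ_succ]
    · rw [Icc_eq_empty (by omega), sum_empty, show d + 1 + 1 - m = 0 by omega, truncSum.zero_right]

lemma sum_le_truncSum_card : ∀ (d : ℕ) (A : Finset ℕ), A ⊆ Icc 1 d → ∑ a ∈ A, a ≤ truncSum d #A
  | 0, A, hA => by
    have hA0 : A = ∅ := subset_empty.1 (by simpa using hA)
    simp [hA0]
  | d + 1, A, hA => by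
    by_cases htop : d + 1 ∈ A
    · have hrest : A.erase (d + 1) ⊆ Icc 1 d := fun a ha => by
        have h1 := mem_Icc.1 (hA (mem_of_mem_erase ha))
        have h2 := ne_of_mem_erase ha
        rw [mem_Icc]
        omega
      have hcard : #A = #(A.erase (d + 1)) + 1 := (card_erase_add_one htop).symm
      rw [← sum_erase_add A _ htop, hcard, truncSum.succ_succ]
      exact Nat.add_le_add_right (sum_le_truncSum_card d _ hrest) _
    · have hrest : A ⊆ Icc 1 d := fun a ha => by
        have h1 := mem_Icc.1 (hA ha)
        have h2 : a ≠ d + 1 := fun h => htop (h ▸ ha)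
        rw [mem_Icc]
        omega
      exact (sum_le_truncSum_card d A hrest).trans (truncSum.le_succ_left d _)

def Matroid.IsRankFn {α : Type*} (M : Matroid α) (r : Finset α → ℕ) : Prop :=
  ∀ S : Finset α, (r S : ℕ∞) = M.eRk S

namespace Matroid.IsRankFn

variable {α : Type*} {M : Matroid α} {r : Finset α → ℕ}

lemma mono (hr : M.IsRankFn r) : Monotone r := fun S T h => by
  have := M.eRk_mono (coe_subset.2 h)
  rwa [← hr, ← hr, Nat.cast_le] at this

lemma le_card (hr : M.IsRankFn r) (S : Finset α) : r S ≤ #S := by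
  have := M.eRk_le_encard S
  rwa [← hr, Set.encard_coe_eq_coe_finsetCard, Nat.cast_le] at this

lemma indep_iff (hr : M.IsRankFn r) {S : Finset α} : M.Indep S ↔ r S = #S := by
  rw [indep_iff_eRk_eq_encard_of_finite S.finite_toSet, ← hr, Set.encard_coe_eq_coe_finsetCard,
    Nat.cast_inj]

variable [DecidableEq α]

lemma union_add_inter_le (hr : M.IsRankFn r) (S T : Finset α) :
    r (S ∪ T) + r (S ∩ T) ≤ r S + r T := by
  have := M.eRk_inter_add_eRk_union_le S T
  rw [← coe_inter, ← coe_union, ← hr, ← hr, ← hr, ← hr, add_comm] at this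
  exact_mod_cast this

lemma insert_le (hr : M.IsRankFn r) (x : α) (S : Finset α) : r (insert x S) ≤ r S + 1 := by
  have := M.eRk_insert_le_add_one x S
  rw [← coe_insert, ← hr, ← hr] at this
  exact_mod_cast this

end Matroid.IsRankFn

def indepMatroid {n : ℕ} (Indep : Finset (Fin n) → Prop) (hempty : Indep ∅)
    (hsubset : ∀ I J, Indep J → I ⊆ J → Indep I)
    (hexchange : ∀ I J, Indep I → Indep J → I.card < J.card → ∃ e ∈ J \ I, Indep (insert e I)) :
    Matroid (Fin n) :=
  (IndepMatroid.ofFinset Set.univ Indep hempty (fun I J hJ hIJ => hsubset I J hJ hIJ)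
    (fun I J hI hJ hlt => by
      obtain ⟨e, he, hins⟩ := hexchange I J hI hJ hlt
      exact ⟨e, (mem_sdiff.1 he).1, (mem_sdiff.1 he).2, hins⟩)
    (fun _ _ => Set.subset_univ _)).matroid

section indepMatroid

variable {n : ℕ} {Indep : Finset (Fin n) → Prop} {hempty : Indep ∅}
  {hsubset : ∀ I J, Indep J → I ⊆ J → Indep I}
  {hexchange : ∀ I J, Indep I → Indep J → I.card < J.card → ∃ e ∈ J \ I, Indep (insert e I)}

lemma indepMatroid_indep_iff {I : Finset (Fin n)} :
    (indepMatroid Indep hempty hsubset hexchange).Indep I ↔ Indep I := by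
  rw [indepMatroid, IndepMatroid.matroid_indep_iff, IndepMatroid.ofFinset_indep]

lemma isRankFn_matroidRank [DecidablePred Indep] :
    (indepMatroid Indep hempty hsubset hexchange).IsRankFn (matroidRank Indep) := by
  intro S
  set M := indepMatroid Indep hempty hsubset hexchange
  apply le_antisymm
  · obtain ⟨I, hI, hsup⟩ :=
      exists_mem_eq_sup _ ⟨∅, mem_filter.2 ⟨empty_mem_powerset S, hempty⟩⟩ card
    rw [mem_filter, mem_powerset] at hI
    rw [matroidRank, hsup, ← Set.encard_coe_eq_coe_finsetCard]
    exact (indepMatroid_indep_iff.2 hI.2).encard_le_eRk_of_subset (coe_subset.2 hI.1)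
  · obtain ⟨I, hI⟩ := (M.isRkFinite_of_finite S.finite_toSet).exists_finset_isBasis'
    rw [← hI.encard_eq_eRk, Set.encard_coe_eq_coe_finsetCard, Nat.cast_le]
    exact le_sup (mem_filter.2 ⟨mem_powerset.2 (coe_subset.1 hI.subset),
      indepMatroid_indep_iff.1 hI.indep⟩)

end indepMatroid

lemma eq_zero_of_eventually_add_smul_mem {E : Type*} [AddCommGroup E] [Module ℝ E] {P : Set E}
    {v w : E} (hv : v ∈ P.extremePoints ℝ) (h : ∀ᶠ ε in 𝓝 (0 : ℝ), v + ε • w ∈ P) : w = 0 := by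
  obtain ⟨δ, hδ, hball⟩ := Metric.eventually_nhds_iff.1 h
  have hclose : ∀ ε : ℝ, |ε| = δ / 2 → v + ε • w ∈ P := fun ε hε =>
    hball (by rw [Real.dist_0_eq_abs, hε]; linarith)
  have hmid : v ∈ openSegment ℝ (v + (δ / 2) • w) (v + (-(δ / 2)) • w) :=
    ⟨1 / 2, 1 / 2, by norm_num, by norm_num, by norm_num, by module⟩
  have hfix : v + (δ / 2) • w = v :=
    hv.2 (hclose _ (abs_of_pos (by linarith)))
      (hclose _ (by rw [abs_neg, abs_of_pos (by linarith)])) hmid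
  simpa [hδ.ne'] using hfix

section basePolytope

variable {n : ℕ} {f : Finset (Fin n) → ℕ}

def IsTight (f : Finset (Fin n) → ℕ) (x : Fin n → ℝ) (S : Finset (Fin n)) : Prop :=
  ∑ i ∈ S, x i = f S

lemma isTight_univ {x : Fin n → ℝ} (hx : x ∈ basePolytope f) : IsTight f x univ := hx.2.2

lemma IsTight.union_inter (hsub : ∀ S T, f (S ∪ T) + f (S ∩ T) ≤ f S + f T) {x : Fin n → ℝ}
    (hx : x ∈ basePolytope f) {S T : Finset (Fin n)} (hS : IsTight f x S) (hT : IsTight f x T) :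
    IsTight f x (S ∪ T) ∧ IsTight f x (S ∩ T) := by
  have hsum : ∑ i ∈ S ∪ T, x i + ∑ i ∈ S ∩ T, x i = ∑ i ∈ S, x i + ∑ i ∈ T, x i :=
    sum_union_inter
  have hf : (f (S ∪ T) : ℝ) + f (S ∩ T) ≤ f S + f T := by exact_mod_cast hsub S T
  have hunion := hx.2.1 (S ∪ T)
  have hinter := hx.2.1 (S ∩ T)
  unfold IsTight at *
  constructor <;> linarith

lemma eventually_add_smul_mem_basePolytope {v w : Fin n → ℝ} (hv : v ∈ basePolytope f)
    (hw : ∀ i, v i = 0 → w i = 0) (htight : ∀ S, IsTight f v S → ∑ i ∈ S, w i = 0) :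
    ∀ᶠ ε in 𝓝 (0 : ℝ), v + ε • w ∈ basePolytope f := by
  have hsum : ∀ (ε : ℝ) S, ∑ i ∈ S, (v + ε • w) i = ∑ i ∈ S, v i + ε * ∑ i ∈ S, w i := by
    intro ε S
    simp only [Pi.add_apply, Pi.smul_apply, smul_eq_mul, sum_add_distrib, mul_sum]
  have hlim : ∀ a b : ℝ, Tendsto (fun ε : ℝ => a + ε * b) (𝓝 0) (𝓝 a) := fun a b =>
    Continuous.tendsto' (by fun_prop) 0 a (by simp)
  have hnonneg : ∀ i, ∀ᶠ ε in 𝓝 (0 : ℝ), 0 ≤ (v + ε • w) i := by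
    intro i
    rcases (hv.1 i).eq_or_lt with hvi | hvi
    · exact Eventually.of_forall fun ε => by simp [← hvi, hw i hvi.symm]
    · exact ((hlim (v i) (w i)).eventually (lt_mem_nhds hvi)).mono fun ε h => h.le
  have hbound : ∀ S, ∀ᶠ ε in 𝓝 (0 : ℝ), ∑ i ∈ S, (v + ε • w) i ≤ f S := by
    intro S
    simp only [hsum]
    by_cases hS : IsTight f v S
    · exact Eventually.of_forall fun ε => by rw [htight S hS, mul_zero, add_zero]; exact hS.le
    · exact ((hlim _ _).eventually (gt_mem_nhds ((hv.2.1 S).lt_of_ne hS))).mono fun ε h => h.le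
  filter_upwards [eventually_all.2 hnonneg, eventually_all.2 hbound] with ε h0 hS
  refine ⟨h0, hS, ?_⟩
  rw [hsum, htight univ (isTight_univ hv), mul_zero, add_zero]
  exact hv.2.2

lemma exists_isTight_separating {v : Fin n → ℝ} (hv : v ∈ (basePolytope f).extremePoints ℝ)
    {i j : Fin n} (hi : v i ≠ 0) (hj : v j ≠ 0) (hij : i ≠ j) :
    ∃ W, IsTight f v W ∧ ¬(i ∈ W ↔ j ∈ W) := by
  by_contra! hsep
  set w : Fin n → ℝ := Pi.single i 1 - Pi.single j 1
  have hw : ∀ k, v k = 0 → w k = 0 := by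
    intro k hk
    have hki : k ≠ i := fun h => hi (h ▸ hk)
    have hkj : k ≠ j := fun h => hj (h ▸ hk)
    simp [w, hki, hkj]
  have htight : ∀ S, IsTight f v S → ∑ k ∈ S, w k = 0 := by
    intro S hS
    simp only [w, Pi.sub_apply, sum_sub_distrib, sum_pi_single', hsep S hS, sub_self]
  have := congrFun (eq_zero_of_eventually_add_smul_mem hv
    (eventually_add_smul_mem_basePolytope hv.1 hw htight)) i
  simp [w, hij] at this

lemma mem_extremePoints_of_isTight {v : Fin n → ℝ} (hv : v ∈ basePolytope f)
    (huniq : ∀ x ∈ basePolytope f, (∀ S, IsTight f v S → IsTight f x S) → x = v) :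
    v ∈ (basePolytope f).extremePoints ℝ := by
  refine ⟨hv, fun x hx y hy ⟨a, b, ha, hb, hab, hxy⟩ => huniq x hx fun S hS => ?_⟩
  have hsum : a * ∑ i ∈ S, x i + b * ∑ i ∈ S, y i = f S := by
    rw [← hS, ← hxy]
    simp only [Pi.add_apply, Pi.smul_apply, smul_eq_mul, sum_add_distrib, mul_sum]
  have hxS := hx.2.1 S
  have hyS := hy.2.1 S
  by_contra hne
  have hlt : ∑ i ∈ S, x i < f S := hxS.lt_of_ne hne
  nlinarith

lemma apply_filter_ne_zero_eq (hmono : Monotone f) {v : Fin n → ℝ} (hv : v ∈ basePolytope f) :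
    f {i | v i ≠ 0} = f univ := by
  refine (hmono (subset_univ _)).antisymm ?_
  have hle : ∑ i ∈ {i | v i ≠ 0}, v i ≤ f {i | v i ≠ 0} := hv.2.1 _
  rw [sum_filter_ne_zero, hv.2.2] at hle
  exact_mod_cast hle

lemma isTight_filter_ne_zero (hmono : Monotone f) {v : Fin n → ℝ} (hv : v ∈ basePolytope f) :
    IsTight f v {i | v i ≠ 0} := by
  rw [IsTight, sum_filter_ne_zero, apply_filter_ne_zero_eq hmono hv]
  exact hv.2.2

end basePolytope

lemma Finset.exists_insert_of_separating {α : Type*} [DecidableEq α] {p : Finset α → Prop}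
    (hunion : ∀ S T, p S → p T → p (S ∪ T)) (hinter : ∀ S T, p S → p T → p (S ∩ T))
    {C : Finset α} (hC : p C) (D : Finset α) (hD : p D) (hCD : C ⊂ D)
    (hsep : ∀ i ∈ D, ∀ j ∈ D, i ≠ j → ∃ W, p W ∧ ¬(i ∈ W ↔ j ∈ W)) :
    ∃ x ∈ D \ C, p (insert x C) := by
  -- A set of `p` separating two points of `D \ C` cuts out a member of `p` strictly between
  -- `C` and `D`, so induction on `D` ends at `D = insert x C`.
  induction D using Finset.strongInduction with
  | H D ih =>
  obtain ⟨i, hiD, hiC⟩ := exists_of_ssubset hCD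
  by_cases hDi : D = insert i C
  · exact ⟨i, mem_sdiff.2 ⟨hiD, hiC⟩, hDi ▸ hD⟩
  obtain ⟨j, hjD, hj⟩ : ∃ j ∈ D, j ∉ insert i C := by
    by_contra! h
    exact hDi (subset_antisymm h (insert_subset hiD hCD.subset))
  rw [mem_insert, not_or] at hj
  have hcut : ∀ a ∈ D, a ∉ C → ∀ b ∈ D, b ∉ C → ∀ W, p W → a ∈ W → b ∉ W →
      ∃ x ∈ D \ C, p (insert x C) := by
    intro a haD haC b hbD hbC W hW haW hbW
    have hCE : C ⊂ C ∪ W ∩ D :=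
      (ssubset_iff_of_subset subset_union_left).2 ⟨a, by simp [haW, haD], haC⟩
    have hED : C ∪ W ∩ D ⊂ D :=
      (ssubset_iff_of_subset (union_subset hCD.subset inter_subset_right)).2
        ⟨b, hbD, by simp [hbC, hbW]⟩
    obtain ⟨x, hx, hxC⟩ := ih _ hED (hunion _ _ hC (hinter _ _ hW hD)) hCE
      fun i hi j hj => hsep i (hED.subset hi) j (hED.subset hj)
    exact ⟨x, sdiff_subset_sdiff hED.subset le_rfl hx, hxC⟩
  obtain ⟨W, hW, hWij⟩ := hsep i hiD j hjD (Ne.symm hj.1)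
  by_cases hiW : i ∈ W
  · exact hcut i hiD hiC j hjD hj.2 W hW hiW fun hjW => hWij ⟨fun _ => hjW, fun _ => hiW⟩
  · exact hcut j hjD hj.2 i hiD hiC W hW (by tauto) hiW

lemma eq_natCast_of_sum_filter_eq {ι : Type*} [Fintype ι] {φ : ι → ℕ} {x : ι → ℝ}
    (hinj : Set.InjOn φ (Function.support φ)) (hx : ∀ i, 0 ≤ x i)
    (h : ∀ m, ∑ i with m ≤ φ i, x i = ∑ i with m ≤ φ i, (φ i : ℝ)) :
    x = fun i => (φ i : ℝ) := by
  classical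
  funext i
  rcases Nat.eq_zero_or_pos (φ i) with hi | hi
  · have hsplit : ∀ y : ι → ℝ, ∑ k with 1 ≤ φ k, y k + ∑ k with ¬1 ≤ φ k, y k
        = ∑ k with 0 ≤ φ k, y k := fun y => by
      rw [sum_filter_add_sum_filter_not, filter_true_of_mem fun k _ => Nat.zero_le _]
    have hφ : ∑ k with ¬1 ≤ φ k, (φ k : ℝ) = 0 :=
      sum_eq_zero fun k hk => by simp_all
    have hx0 : ∑ k with ¬1 ≤ φ k, x k = 0 := by
      linarith [hsplit x, hsplit fun k => (φ k : ℝ), h 0, h 1]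
    rw [sum_eq_zero_iff_of_nonneg fun k _ => hx k] at hx0
    simpa [hi] using hx0 i (by simp [hi])
  · have hlevel : univ.filter (φ i ≤ φ ·) = insert i (univ.filter (φ i + 1 ≤ φ ·)) := by
      ext k
      simp only [mem_filter, mem_univ, true_and, mem_insert]
      constructor
      · intro hk
        by_cases hki : k = i
        · exact .inl hki
        · exact .inr (lt_of_le_of_ne hk fun heq => hki (hinj (by simp; omega) (by simp; omega)
            heq.symm))
      · rintro (rfl | hk) <;> omega
    have hi' : i ∉ univ.filter (φ i + 1 ≤ φ ·) := by simp
    have hm := h (φ i)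
    rw [hlevel, sum_insert hi', sum_insert hi', h (φ i + 1)] at hm
    linarith

lemma exists_natCast_eq_of_image_eq {ι : Type*} {v : ι → ℝ} {B : Finset ι} {d : ℕ}
    (hsupp : ∀ i, v i ≠ 0 ↔ i ∈ B) (himg : B.image v = (Icc 1 d).image (fun m : ℕ => (m : ℝ))) :
    ∃ φ : ι → ℕ, v = (fun i => (φ i : ℝ)) ∧ (∀ i, φ i ≠ 0 ↔ i ∈ B) ∧ B.image φ = Icc 1 d := by
  classical
  have hv : v = fun i => (⌊v i⌋₊ : ℝ) := by
    funext i
    by_cases hi : i ∈ B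
    · obtain ⟨m, -, hm⟩ := mem_image.1 (himg ▸ mem_image_of_mem v hi)
      rw [← hm, Nat.floor_natCast]
    · rw [not_not.1 (mt (hsupp i).1 hi), Nat.floor_zero, Nat.cast_zero]
  refine ⟨fun i => ⌊v i⌋₊, hv, fun i => ?_, image_injective (Nat.cast_injective (R := ℝ)) ?_⟩
  · rw [← hsupp i, not_iff_not]
    exact ⟨fun h => (congrFun hv i).trans (by simp [h]), fun h => by simp [h]⟩
  · rw [← himg, image_image]
    exact congrArg B.image hv.symm

section rank

variable {n : ℕ} {M : Matroid (Fin n)} {r : Finset (Fin n) → ℕ} {d : ℕ}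

lemma polymatroidBar_union_add_inter_le (hr : M.IsRankFn r) (S T : Finset (Fin n)) :
    polymatroidBar r d (S ∪ T) + polymatroidBar r d (S ∩ T)
      ≤ polymatroidBar r d S + polymatroidBar r d T :=
  truncSum.add_le_add_of_add_le (hr.mono inter_subset_left) (hr.mono inter_subset_right)
    (hr.mono subset_union_left) (hr.mono subset_union_right) (hr.union_add_inter_le S T)

lemma polymatroidBar_mono (hr : M.IsRankFn r) : Monotone (polymatroidBar r d) := fun _ _ h =>
  truncSum.mono d (hr.mono h)

variable {B : Finset (Fin n)} {φ : Fin n → ℕ}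

lemma natCast_mem_basePolytope (hr : M.IsRankFn r) (hd : r univ = d) (hB : M.Indep B)
    (hinj : Set.InjOn φ B) (hsupp : ∀ i, φ i ≠ 0 ↔ i ∈ B) (himg : B.image φ = Icc 1 d) :
    (fun i => (φ i : ℝ)) ∈ basePolytope (polymatroidBar r d) := by
  have hsum_inter : ∀ S, ∑ i ∈ S, φ i = ∑ i ∈ S ∩ B, φ i := fun S => by
    rw [← filter_mem_eq_inter, sum_filter_of_ne fun i _ h => (hsupp i).1 h]
  refine ⟨fun i => Nat.cast_nonneg _, fun S => ?_, ?_⟩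
  · rw [← Nat.cast_sum, Nat.cast_le, hsum_inter,
      ← sum_image (f := fun a => a) (hinj.mono inter_subset_right), polymatroidBar_eq_truncSum]
    have hrank : #(S ∩ B) ≤ r S :=
      hr.indep_iff.1 (hB.subset (coe_subset.2 inter_subset_right)) ▸ hr.mono inter_subset_left
    calc ∑ a ∈ (S ∩ B).image φ, a ≤ truncSum d #((S ∩ B).image φ) :=
          sum_le_truncSum_card d _ (himg ▸ image_subset_image inter_subset_right)
      _ = truncSum d #(S ∩ B) := by rw [card_image_of_injOn (hinj.mono inter_subset_right)]
      _ ≤ truncSum d (r S) := truncSum.mono d hrank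
  · rw [← Nat.cast_sum, Nat.cast_inj, hsum_inter, univ_inter,
      ← sum_image (f := fun a => a) hinj, himg, sum_Icc_eq_truncSum le_rfl,
      polymatroidBar_eq_truncSum, hd, Nat.add_sub_cancel]

lemma isTight_natCast_filter_le (hr : M.IsRankFn r) (hB : M.Indep B) (hinj : Set.InjOn φ B)
    (hsupp : ∀ i, φ i ≠ 0 ↔ i ∈ B) (himg : B.image φ = Icc 1 d) {m : ℕ} (hm : 1 ≤ m) :
    IsTight (polymatroidBar r d) (fun i => (φ i : ℝ)) {i | m ≤ φ i} := by
  have hsub : ({i | m ≤ φ i} : Finset (Fin n)) ⊆ B := fun i hi =>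
    (hsupp i).1 (by simp at hi; omega)
  have hlevel_img : ({i | m ≤ φ i} : Finset (Fin n)).image φ = Icc m d := by
    ext a
    simp only [mem_image, mem_filter, mem_univ, true_and, mem_Icc]
    constructor
    · rintro ⟨i, hmi, rfl⟩
      have hi : φ i ∈ Icc 1 d := himg ▸ mem_image_of_mem φ (hsub (by simpa using hmi))
      exact ⟨hmi, (mem_Icc.1 hi).2⟩
    · rintro ⟨hma, had⟩
      have ha : a ∈ B.image φ := himg ▸ mem_Icc.2 ⟨by omega, had⟩
      obtain ⟨i, -, hi⟩ := mem_image.1 ha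
      exact ⟨i, hi ▸ hma, hi⟩
  rw [IsTight, ← Nat.cast_sum, Nat.cast_inj, ← sum_image (f := fun a => a) (hinj.mono hsub),
    hlevel_img, sum_Icc_eq_truncSum hm, polymatroidBar_eq_truncSum, hr.indep_iff.1 (hB.subset hsub),
    ← card_image_of_injOn (hinj.mono hsub), hlevel_img, Nat.card_Icc]

lemma natCast_mem_extremePoints (hr : M.IsRankFn r) (hd : r univ = d) (hB : M.Indep B)
    (hBd : #B = d) (hsupp : ∀ i, φ i ≠ 0 ↔ i ∈ B) (himg : B.image φ = Icc 1 d) :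
    (fun i => (φ i : ℝ)) ∈ (basePolytope (polymatroidBar r d)).extremePoints ℝ := by
  have hinj : Set.InjOn φ B := by
    rw [← card_image_iff, himg, Nat.card_Icc, hBd]
    omega
  have hmem := natCast_mem_basePolytope hr hd hB hinj hsupp himg
  refine mem_extremePoints_of_isTight hmem fun x hx htight => ?_
  have hsupp' : Function.support φ = B := Set.ext hsupp
  refine eq_natCast_of_sum_filter_eq (hsupp' ▸ hinj) hx.1 fun m => ?_
  suffices hlevel : IsTight (polymatroidBar r d) (fun i => (φ i : ℝ)) {i | m ≤ φ i} from
    (htight _ hlevel).trans hlevel.symm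
  rcases Nat.eq_zero_or_pos m with rfl | hm
  · simpa using isTight_univ hmem
  · exact isTight_natCast_filter_le hr hB hinj hsupp himg hm

end rank

section extreme

variable {n : ℕ} {M : Matroid (Fin n)} {r : Finset (Fin n) → ℕ} {d : ℕ} {v : Fin n → ℝ}

lemma rank_insert_of_isTight (hr : M.IsRankFn r) (hd : r univ = d)
    {C : Finset (Fin n)} {x : Fin n} (hx : x ∉ C) (hvx : v x ≠ 0)
    (hC : IsTight (polymatroidBar r d) v C) (hxC : IsTight (polymatroidBar r d) v (insert x C)) :
    r (insert x C) = r C + 1 ∧ v x = (d - r C : ℕ) := by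
  have hgap : v x = truncSum d (r (insert x C)) - truncSum d (r C) := by
    rw [IsTight, sum_insert hx, hC] at hxC
    simp only [polymatroidBar_eq_truncSum] at hxC
    linarith
  have htop : r (insert x C) ≤ d := hd ▸ hr.mono (subset_univ _)
  obtain heq | heq : r (insert x C) = r C ∨ r (insert x C) = r C + 1 := by
    have := hr.insert_le x C
    have := hr.mono (subset_insert x C)
    omega
  · exact absurd (by rw [hgap, heq, sub_self]) hvx
  · refine ⟨heq, ?_⟩
    rw [hgap, heq, truncSum.succ_right (by omega)]
    push_cast
    ring

lemma exists_isTight_chain (hr : M.IsRankFn r) (hd : r univ = d)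
    (hv : v ∈ (basePolytope (polymatroidBar r d)).extremePoints ℝ) :
    ∀ t ≤ #{i | v i ≠ 0}, ∃ C : Finset (Fin n), C ⊆ ({i | v i ≠ 0} : Finset (Fin n)) ∧
      IsTight (polymatroidBar r d) v C ∧ #C = t ∧ r C = t ∧
      C.image v = (Icc (d + 1 - t) d).image (fun m : ℕ => (m : ℝ))
  | 0, _ => by
    have hr0 : r ∅ = 0 := Nat.le_zero.1 (hr.le_card ∅)
    refine ⟨∅, empty_subset _, ?_, card_empty, hr0, ?_⟩
    · simp [IsTight, polymatroidBar_eq_truncSum, hr0, truncSum.zero_right]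
    · rw [Icc_eq_empty (by omega), image_empty, image_empty]
  | t + 1, ht => by
    obtain ⟨C, hCsupp, hC, hCcard, hCr, hCimg⟩ := exists_isTight_chain hr hd hv t (by omega)
    obtain ⟨x, hx, hxC⟩ := Finset.exists_insert_of_separating
      (fun S T hS hT => (hS.union_inter (polymatroidBar_union_add_inter_le hr) hv.1 hT).1)
      (fun S T hS hT => (hS.union_inter (polymatroidBar_union_add_inter_le hr) hv.1 hT).2)
      hC _ (isTight_filter_ne_zero (polymatroidBar_mono hr) hv.1)
      (Finset.ssubset_iff_subset_ne.2 ⟨hCsupp, fun h => by rw [h] at hCcard; omega⟩)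
      fun i hi j hj hij => exists_isTight_separating hv (by simpa using hi) (by simpa using hj) hij
    rw [Finset.mem_sdiff, mem_filter] at hx
    obtain ⟨hrx, hvx⟩ := rank_insert_of_isTight hr hd hx.2 hx.1.2 hC hxC
    have htd : t + 1 ≤ d := by
      have := hr.mono (subset_univ (insert x C))
      omega
    refine ⟨insert x C, insert_subset (mem_filter.2 hx.1) hCsupp, hxC, ?_, by rw [hrx, hCr], ?_⟩
    · rw [card_insert_of_notMem hx.2, hCcard]
    · rw [image_insert, hCimg, hvx, hCr, ← image_insert, show d + 1 - t = d - t + 1 by omega,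
        insert_Icc_add_one_left_eq_Icc (by omega), show d + 1 - (t + 1) = d - t by omega]

lemma exists_basis_of_mem_extremePoints (hr : M.IsRankFn r) (hd : r univ = d)
    (hv : v ∈ (basePolytope (polymatroidBar r d)).extremePoints ℝ) :
    ∃ B : Finset (Fin n), M.Indep B ∧ #B = d ∧ (∀ i, v i ≠ 0 ↔ i ∈ B) ∧
      B.image v = (Icc 1 d).image (fun m : ℕ => (m : ℝ)) := by
  obtain ⟨C, hCsupp, -, hCcard, hCr, hCimg⟩ := exists_isTight_chain hr hd hv _ le_rfl
  obtain rfl : C = ({i | v i ≠ 0} : Finset (Fin n)) := eq_of_subset_of_card_le hCsupp hCcard.ge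
  have hrC : r {i | v i ≠ 0} = d := by
    refine ((hr.mono (subset_univ _)).trans_eq hd).eq_or_lt.resolve_right fun hlt => ?_
    have := apply_filter_ne_zero_eq (polymatroidBar_mono hr) hv.1
    rw [polymatroidBar_eq_truncSum, polymatroidBar_eq_truncSum, hd] at this
    exact (truncSum.lt_truncSum_self hlt).ne this
  refine ⟨_, hr.indep_iff.2 hCr, hCr.symm.trans hrC, fun i => by simp, ?_⟩
  rw [hCimg, ← hCr, hrC, Nat.add_sub_cancel_left]

end extreme

/-- Let `r` be the rank function of a matroid `M` of rank `d` on `[n]`.  The vertices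
(extreme points) of the polytope `B(r̄)` are exactly the points `v ∈ ℝⁿ` whose support
is a basis `B` of `M` and whose nonzero entries comprise exactly the numbers
`1, 2, …, d`, each occurring once. -/
theorem extremePoints_basePolytope_bar {n : ℕ} (Indep : Finset (Fin n) → Prop)
    [DecidablePred Indep]
    (hempty : Indep ∅)
    (hsubset : ∀ I J, Indep J → I ⊆ J → Indep I)
    (hexchange : ∀ I J, Indep I → Indep J → I.card < J.card →
      ∃ e ∈ J \ I, Indep (insert e I))
    (d : ℕ) (hd : matroidRank Indep Finset.univ = d) (v : Fin n → ℝ) :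
    v ∈ (basePolytope (polymatroidBar (matroidRank Indep) d)).extremePoints ℝ ↔
      ∃ B : Finset (Fin n), Indep B ∧ B.card = d ∧
        (∀ i, v i ≠ 0 ↔ i ∈ B) ∧
        B.image v = (Finset.Icc 1 d).image (fun m : ℕ => (m : ℝ)) := by
  have hr := isRankFn_matroidRank (hempty := hempty) (hsubset := hsubset) (hexchange := hexchange)
  constructor
  · intro hv
    obtain ⟨B, hB, hBd, hsupp, himg⟩ := exists_basis_of_mem_extremePoints hr hd hv
    exact ⟨B, indepMatroid_indep_iff.1 hB, hBd, hsupp, himg⟩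
  · rintro ⟨B, hB, hBd, hsupp, himg⟩
    obtain ⟨φ, rfl, hφsupp, hφimg⟩ := exists_natCast_eq_of_image_eq hsupp himg
    exact natCast_mem_extremePoints hr hd (indepMatroid_indep_iff.2 hB) hBd hφsupp hφimg
end

section
/- Let r be a polymatroid on [n] of rank d. Then the base polytope of r̄ is the Minkowski sum of the base polytopes of the truncations: B(r̄) = B(r_0) + B(r_1) + ⋯ + B(r_d) as subsets of ℝ^n. -/
open Pointwise

/-!
Every polymatroid base polytope `B(f)` is the convex hull of its greedy vertices: for an ordering
`σ` of `[n]`, the greedy vertex puts `f(σ₀..σᵢ) - f(σ₀..σᵢ₋₁)` on `σᵢ`, and a linear functional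
is maximised on `B(f)` at the greedy vertex of an ordering by decreasing weight (Edmonds).
Greedy vertices are additive in `f`, so `B(f + g) ⊆ B(f) + B(g)`; the reverse inclusion is
immediate. Truncations of a polymatroid are polymatroids, and `r̄` is their sum.
-/

open Finset

namespace IsPolymatroid

variable {n : ℕ} {f g : Finset (Fin n) → ℕ}

lemma add (hf : IsPolymatroid f) (hg : IsPolymatroid g) : IsPolymatroid (f + g) := by
  refine ⟨by simp [hf.1, hg.1], fun S T hST => add_le_add (hf.2.1 S T hST) (hg.2.1 S T hST),
    fun S T => ?_⟩
  have := hf.2.2 S T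
  have := hg.2.2 S T
  simp only [Pi.add_apply]
  omega

lemma zero : IsPolymatroid (0 : Finset (Fin n) → ℕ) :=
  ⟨rfl, fun _ _ _ => le_rfl, fun _ _ => le_rfl⟩

lemma sum {ι : Type*} {s : Finset ι} {g : ι → Finset (Fin n) → ℕ}
    (h : ∀ k ∈ s, IsPolymatroid (g k)) : IsPolymatroid (∑ k ∈ s, g k) :=
  Finset.sum_induction g IsPolymatroid (fun _ _ => add) zero h

lemma truncate (hf : IsPolymatroid f) (m : ℕ) : IsPolymatroid fun S => min m (f S) := by
  refine ⟨by simp [hf.1], fun S T hST => min_le_min le_rfl (hf.2.1 S T hST), fun S T => ?_⟩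
  have := hf.2.2 S T
  have := hf.2.1 _ _ (inter_subset_left : S ∩ T ⊆ S)
  have := hf.2.1 _ _ (inter_subset_right : S ∩ T ⊆ T)
  show min m (f (S ∪ T)) + min m (f (S ∩ T)) ≤ min m (f S) + min m (f T)
  omega

lemma insert_add_le_insert_add (hf : IsPolymatroid f) {A B : Finset (Fin n)} {e : Fin n}
    (hAB : A ⊆ B) (he : e ∉ B) : f (insert e B) + f A ≤ f (insert e A) + f B := by
  have h := hf.2.2 (insert e A) B
  rwa [insert_union, union_eq_right.2 hAB, insert_inter_of_notMem he,
    inter_eq_left.2 hAB] at h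

end IsPolymatroid

section BasePolytope

variable {n : ℕ} {f g : Finset (Fin n) → ℕ}

lemma add_mem_basePolytope {x y : Fin n → ℝ} (hx : x ∈ basePolytope f)
    (hy : y ∈ basePolytope g) : x + y ∈ basePolytope (f + g) := by
  refine ⟨fun i => add_nonneg (hx.1 i) (hy.1 i), fun S => ?_, ?_⟩
  · simpa [sum_add_distrib] using add_le_add (hx.2.1 S) (hy.2.1 S)
  · simp [sum_add_distrib, hx.2.2, hy.2.2]

lemma convex_basePolytope (f : Finset (Fin n) → ℕ) : Convex ℝ (basePolytope f) := by
  intro x hx y hy a b ha hb hab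
  refine ⟨fun i => ?_, fun S => ?_, ?_⟩
  · simpa using add_nonneg (mul_nonneg ha (hx.1 i)) (mul_nonneg hb (hy.1 i))
  · simp only [Pi.add_apply, Pi.smul_apply, smul_eq_mul, sum_add_distrib, ← mul_sum]
    nlinarith [hx.2.1 S, hy.2.1 S]
  · simp only [Pi.add_apply, Pi.smul_apply, smul_eq_mul, sum_add_distrib, ← mul_sum, hx.2.2,
      hy.2.2, ← add_mul, hab, one_mul]

lemma basePolytope_zero : basePolytope (0 : Finset (Fin n) → ℕ) = 0 := by
  ext x
  simp only [basePolytope, Pi.zero_apply, CharP.cast_eq_zero, Set.mem_ofPred_eq, Set.mem_zero]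
  constructor
  · rintro ⟨hnonneg, -, hsum⟩
    funext i
    exact (sum_eq_zero_iff_of_nonneg fun i _ => hnonneg i).1 hsum i (mem_univ i)
  · rintro rfl
    simp

end BasePolytope

lemma sum_mul_sub_nonpos {R : Type*} [CommRing R] [LinearOrder R] [IsStrictOrderedRing R]
    {w D : ℕ → R} {n : ℕ} (hw : ∀ i, i + 1 < n → w (i + 1) ≤ w i)
    (hD : ∀ i, D i ≤ 0) (hD₀ : D 0 = 0) (hDn : D n = 0) :
    ∑ i ∈ range n, w i * (D (i + 1) - D i) ≤ 0 := by
  -- Abel summation: the partial sums are bounded by `w (m - 1) * D m`.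
  suffices h : ∀ m ≤ n, ∑ i ∈ range m, w i * (D (i + 1) - D i) ≤ w (m - 1) * D m by
    simpa [hDn] using h n le_rfl
  intro m
  induction m with
  | zero => simp [hD₀]
  | succ m ih =>
    intro hm
    rw [sum_range_succ, Nat.add_sub_cancel]
    rcases m with _ | k
    · simp [hD₀]
    · have := mul_nonpos_of_nonneg_of_nonpos (sub_nonneg.2 (hw k hm)) (hD (k + 1))
      simp only [Nat.add_sub_cancel] at ih
      nlinarith [ih (by omega)]

namespace Polymatroid

variable {n : ℕ} (σ : Equiv.Perm (Fin n))

/-- The first `i` elements of `[n]` in the order `σ 0, σ 1, …`. -/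
def chain (i : ℕ) : Finset (Fin n) :=
  univ.filter fun j => (σ.symm j : ℕ) < i

lemma chain_zero : chain σ 0 = ∅ := by
  ext j
  simp [chain]

lemma chain_self : chain σ n = univ := by
  ext j
  simp [chain]

lemma chain_succ (i : Fin n) : chain σ (i + 1) = insert (σ i) (chain σ i) := by
  ext j
  simp only [chain, mem_filter, mem_univ, true_and, mem_insert, Nat.lt_succ_iff_lt_or_eq,
    Fin.val_inj, Equiv.symm_apply_eq]
  tauto

lemma apply_notMem_chain (i : Fin n) : σ i ∉ chain σ i := by
  simp [chain]

lemma sum_chain_succ_sub (h : Finset (Fin n) → ℝ) :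
    ∑ i : Fin n, (h (chain σ (i + 1)) - h (chain σ i)) = h univ - h ∅ := by
  rw [Fin.sum_univ_eq_sum_range (fun i => h (chain σ (i + 1)) - h (chain σ i)),
    sum_range_sub (fun i => h (chain σ i)), chain_self, chain_zero]

noncomputable def greedyVertex (f : Finset (Fin n) → ℕ) (j : Fin n) : ℝ :=
  f (chain σ (σ.symm j + 1)) - f (chain σ (σ.symm j))

variable {σ} {f g : Finset (Fin n) → ℕ}

lemma greedyVertex_apply (i : Fin n) :
    greedyVertex σ f (σ i) = f (chain σ (i + 1)) - f (chain σ i) := by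
  simp [greedyVertex]

lemma greedyVertex_add : greedyVertex σ (f + g) = greedyVertex σ f + greedyVertex σ g := by
  funext j
  simp only [greedyVertex, Pi.add_apply, Nat.cast_add]
  ring

lemma greedyVertex_nonneg (hf : IsPolymatroid f) (j : Fin n) : 0 ≤ greedyVertex σ f j := by
  obtain ⟨i, rfl⟩ := σ.surjective j
  rw [greedyVertex_apply, sub_nonneg, chain_succ]
  exact_mod_cast hf.2.1 _ _ (subset_insert _ _)

lemma sum_greedyVertex_le (hf : IsPolymatroid f) (S : Finset (Fin n)) :
    ∑ j ∈ S, greedyVertex σ f j ≤ f S := by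
  have step : ∀ i : Fin n, (if σ i ∈ S then greedyVertex σ f (σ i) else 0) ≤
      f (S ∩ chain σ (i + 1)) - f (S ∩ chain σ i) := by
    intro i
    rw [chain_succ]
    split_ifs with hi
    · have h : (f (insert (σ i) (chain σ i)) : ℝ) + f (S ∩ chain σ i) ≤
          f (insert (σ i) (S ∩ chain σ i)) + f (chain σ i) := by
        exact_mod_cast hf.insert_add_le_insert_add inter_subset_right (apply_notMem_chain σ i)
      rw [greedyVertex_apply, chain_succ, inter_insert_of_mem hi]
      linarith
    · simp [inter_insert_of_notMem hi]
  calc ∑ j ∈ S, greedyVertex σ f j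
      = ∑ i : Fin n, if σ i ∈ S then greedyVertex σ f (σ i) else 0 := by
        rw [Equiv.sum_comp σ (fun j => if j ∈ S then greedyVertex σ f j else 0), sum_ite_mem,
          univ_inter]
    _ ≤ ∑ i : Fin n, ((f (S ∩ chain σ (i + 1)) : ℝ) - f (S ∩ chain σ i)) :=
        sum_le_sum fun i _ => step i
    _ = f S - f ∅ := by
        rw [sum_chain_succ_sub σ fun T => (f (S ∩ T) : ℝ), inter_univ, inter_empty]
    _ ≤ f S := by simp

lemma sum_greedyVertex (hf₀ : f ∅ = 0) : ∑ j, greedyVertex σ f j = f univ := by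
  rw [← Equiv.sum_comp σ]
  simp_rw [greedyVertex_apply]
  rw [sum_chain_succ_sub σ fun T => (f T : ℝ), hf₀, Nat.cast_zero, sub_zero]

lemma greedyVertex_mem_basePolytope (hf : IsPolymatroid f) :
    greedyVertex σ f ∈ basePolytope f :=
  ⟨greedyVertex_nonneg hf, sum_greedyVertex_le hf, sum_greedyVertex hf.1⟩

lemma sum_mul_le_sum_mul_greedyVertex (hf₀ : f ∅ = 0) {x : Fin n → ℝ}
    (hx : x ∈ basePolytope f) (c : Fin n → ℝ) (hσ : Antitone (c ∘ σ)) :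
    ∑ j, c j * x j ≤ ∑ j, c j * greedyVertex σ f j := by
  set D : ℕ → ℝ := fun m => ∑ j ∈ chain σ m, x j - f (chain σ m)
  set w : ℕ → ℝ := fun i => if h : i < n then c (σ ⟨i, h⟩) else 0
  have hstep (i : Fin n) : x (σ i) - greedyVertex σ f (σ i) = D (i + 1) - D i := by
    simp only [D, chain_succ, sum_insert (apply_notMem_chain σ i), greedyVertex_apply]
    ring
  have hw (i : ℕ) (hi : i + 1 < n) : w (i + 1) ≤ w i := by
    simp only [w, dif_pos hi, dif_pos (Nat.lt_of_succ_lt hi)]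
    exact hσ (Fin.mk_le_mk.2 (Nat.le_succ i))
  have hD₀ : D 0 = 0 := by simp [D, chain_zero, hf₀]
  have hDn : D n = 0 := by simp [D, chain_self, hx.2.2]
  have key := sum_mul_sub_nonpos hw (fun m => sub_nonpos.2 (hx.2.1 _)) hD₀ hDn
  rw [← Fin.sum_univ_eq_sum_range (fun i => w i * (D (i + 1) - D i))] at key
  rw [← sub_nonpos, ← sum_sub_distrib, ← Equiv.sum_comp σ]
  refine le_of_eq_of_le (sum_congr rfl fun i _ => ?_) key
  simp [w, ← hstep, mul_sub]

lemma basePolytope_subset_convexHull (hf₀ : f ∅ = 0) :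
    basePolytope f ⊆ convexHull ℝ (Set.range fun σ => greedyVertex σ f) := by
  intro x hx
  by_contra hx'
  obtain ⟨φ, u, hφ, hu⟩ := geometric_hahn_banach_closed_point (convex_convexHull ℝ _)
    ((Set.finite_range _).isClosed_convexHull (𝕜 := ℝ)) hx'
  set c : Fin n → ℝ := fun j => φ fun k => if j = k then 1 else 0
  have hφ_eq (y : Fin n → ℝ) : φ y = ∑ j, c j * y j := by
    simpa [mul_comm] using φ.toLinearMap.pi_apply_eq_sum_univ y
  obtain ⟨σ, hσ⟩ : ∃ σ : Equiv.Perm (Fin n), Antitone (c ∘ σ) :=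
    ⟨Tuple.sort (OrderDual.toDual ∘ c), fun _ _ h => Tuple.monotone_sort (OrderDual.toDual ∘ c) h⟩
  have hle := sum_mul_le_sum_mul_greedyVertex hf₀ hx c hσ
  have hlt := hφ _ (subset_convexHull ℝ _ ⟨σ, rfl⟩)
  rw [← hφ_eq, ← hφ_eq] at hle
  linarith

end Polymatroid

open Polymatroid in
lemma basePolytope_add {n : ℕ} {f g : Finset (Fin n) → ℕ} (hf : IsPolymatroid f)
    (hg : IsPolymatroid g) : basePolytope (f + g) = basePolytope f + basePolytope g := by
  refine subset_antisymm (fun x hx => ?_) ?_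
  · refine convexHull_min ?_ ((convex_basePolytope f).add (convex_basePolytope g))
      (basePolytope_subset_convexHull (hf.add hg).1 hx)
    rintro _ ⟨σ, rfl⟩
    change greedyVertex σ (f + g) ∈ _
    rw [greedyVertex_add]
    exact Set.add_mem_add (greedyVertex_mem_basePolytope hf) (greedyVertex_mem_basePolytope hg)
  · rintro _ ⟨x, hx, y, hy, rfl⟩
    exact add_mem_basePolytope hx hy

lemma basePolytope_sum {n : ℕ} {ι : Type*} {s : Finset ι} {g : ι → Finset (Fin n) → ℕ}
    (hg : ∀ k ∈ s, IsPolymatroid (g k)) :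
    basePolytope (∑ k ∈ s, g k) = ∑ k ∈ s, basePolytope (g k) := by
  classical
  induction s using Finset.induction_on with
  | empty => simpa using basePolytope_zero
  | insert a s ha ih =>
    have hs : ∀ k ∈ s, IsPolymatroid (g k) := fun k hk => hg k (mem_insert_of_mem hk)
    rw [sum_insert ha, sum_insert ha, basePolytope_add (hg a (mem_insert_self a s))
      (IsPolymatroid.sum hs), ih hs]

theorem basePolytope_bar_eq_minkowski_sum_general {n : ℕ} (r : Finset (Fin n) → ℕ)
    (hr : IsPolymatroid r) (d : ℕ) :
    basePolytope (fun S => ∑ k ∈ Finset.range (d + 1), min (d - k) (r S)) =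
      ∑ k ∈ Finset.range (d + 1), basePolytope (fun S => min (d - k) (r S)) := by
  have h := basePolytope_sum (s := range (d + 1)) (g := fun k S => min (d - k) (r S))
    fun k _ => hr.truncate (d - k)
  rwa [sum_fn] at h

/-- For a polymatroid `r` of rank `d`, the base polytope of `r̄ = r_0 + ⋯ + r_d` is the
Minkowski sum of the base polytopes of the truncations `r_k S = min (d - k) (r S)`. -/
theorem basePolytope_bar_eq_minkowski_sum {n : ℕ} (r : Finset (Fin n) → ℕ)
    (hr : IsPolymatroid r) (d : ℕ) (hd : r Finset.univ = d) :
    basePolytope (fun S => ∑ k ∈ Finset.range (d + 1), min (d - k) (r S)) =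
      ∑ k ∈ Finset.range (d + 1), basePolytope (fun S => min (d - k) (r S)) :=
  basePolytope_bar_eq_minkowski_sum_general r hr d
end

section
/- Let d ≥ 0 and let A ⊆ (ℤ_{≥0})^n be a nonempty finite set such that Σ_{i=1}^n αᵢ = d for every α ∈ A. For 0 ≤ k ≤ d set A_k = {α ∈ (ℤ_{≥0})^n : Σ_{i=1}^n αᵢ = d−k and α ≤ β componentwise for some β ∈ A}. Then for every S ⊆ [n], max_{α ∈ A_k} Σ_{i∈S} αᵢ = min(d−k, max_{β ∈ A} Σ_{i∈S} βᵢ). -/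
/-!
Both sides are suprema over `β ∈ A`: the left one by splitting the union, the right one because
`min (d - k)` distributes over a finite supremum in `ℕ`. So it suffices to treat a single `β`.
Every `α ≤ β` of degree `m = d - k` has `∑_S α ≤ min m (∑_S β)`, and the bound is attained by
building `α` one unit at a time, raising coordinates in `S` while `∑_S α < ∑_S β` and coordinates
outside `S` afterwards.
-/

open Finset

section
variable {ι : Type*} [DecidableEq ι]

theorem exists_add_single_le_of_sum_lt {s : Finset ι} {f g : ι → ℕ} (hgf : g ≤ f)
    (hlt : ∑ i ∈ s, g i < ∑ i ∈ s, f i) : ∃ j ∈ s, g + Pi.single j 1 ≤ f := by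
  obtain ⟨j, hj, hgj⟩ := exists_lt_of_sum_lt hlt
  refine ⟨j, hj, fun i => ?_⟩
  rcases eq_or_ne i j with rfl | hij
  · simpa using hgj
  · simpa [hij] using hgf i

theorem sum_add_single_one (s : Finset ι) (g : ι → ℕ) (j : ι) :
    ∑ i ∈ s, (g + Pi.single j 1 : ι → ℕ) i = ∑ i ∈ s, g i + if j ∈ s then 1 else 0 := by
  rw [← sum_pi_single' j 1 s, ← sum_add_distrib]
  rfl

variable [Fintype ι]

theorem exists_le_sum_eq_and_sum_eq_min (f : ι → ℕ) (S : Finset ι) :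
    ∀ m ≤ ∑ i, f i, ∃ g ≤ f, ∑ i, g i = m ∧ ∑ i ∈ S, g i = min m (∑ i ∈ S, f i) := by
  intro m
  induction m with
  | zero => exact fun _ => ⟨0, fun i => Nat.zero_le (f i), by simp, by simp⟩
  | succ m ih =>
    intro hm
    obtain ⟨g, hgf, hsum, hsumS⟩ := ih (by omega)
    have htotal := sum_add_sum_compl S g
    have htotal' := sum_add_sum_compl S f
    by_cases hS : m < ∑ i ∈ S, f i
    · obtain ⟨j, hj, hle⟩ := exists_add_single_le_of_sum_lt hgf (s := S) (by omega)
      refine ⟨_, hle, ?_, ?_⟩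
      · rw [sum_add_single_one, if_pos (mem_univ j), hsum]
      · rw [sum_add_single_one, if_pos hj]; omega
    · obtain ⟨j, hj, hle⟩ := exists_add_single_le_of_sum_lt hgf (s := Sᶜ) (by omega)
      refine ⟨_, hle, ?_, ?_⟩
      · rw [sum_add_single_one, if_pos (mem_univ j), hsum]
      · rw [sum_add_single_one, if_neg (mem_compl.mp hj)]; omega

theorem sup_sum_filter_Iic_sum_eq (β : ι → ℕ) (S : Finset ι) {m : ℕ} (hm : m ≤ ∑ i, β i) :
    ((Iic β).filter fun α => ∑ i, α i = m).sup (fun α => ∑ i ∈ S, α i) =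
      min m (∑ i ∈ S, β i) := by
  apply le_antisymm
  · refine Finset.sup_le fun α hα => ?_
    rw [mem_filter, mem_Iic] at hα
    exact le_min (hα.2 ▸ sum_le_univ_sum_of_nonneg fun _ => Nat.zero_le _)
      (sum_le_sum fun i _ => hα.1 i)
  · obtain ⟨α, hαβ, hsum, hsumS⟩ := exists_le_sum_eq_and_sum_eq_min β S m hm
    rw [← hsumS]
    exact le_sup (f := fun α : ι → ℕ => ∑ i ∈ S, α i) (by simp [hαβ, hsum])

end

theorem truncation_eq_derivative_polymatroid_general {n : ℕ} (d k : ℕ)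
    (A : Finset (Fin n → ℕ))
    (hdeg : ∀ α ∈ A, ∑ i, α i = d) (S : Finset (Fin n)) :
    ((A.biUnion fun β => (Finset.Iic β).filter fun α => ∑ i, α i = d - k).sup
        fun α => ∑ i ∈ S, α i) =
      min (d - k) (A.sup fun β => ∑ i ∈ S, β i) := by
  rw [sup_biUnion]
  refine (sup_congr rfl fun β hβ => ?_).trans (sup_inf_distrib_left A _ (d - k)).symm
  exact sup_sum_filter_Iic_sum_eq β S ((hdeg β hβ).symm ▸ Nat.sub_le d k)

/-- Let `A ⊆ (ℤ_{≥0})ⁿ` be a nonempty finite set of vectors all of coordinate sum `d`,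
and for `0 ≤ k ≤ d` let `A_k` be the set of nonnegative integer vectors of coordinate
sum `d − k` lying componentwise below some element of `A`.  Then for every `S ⊆ [n]`,
`max_{α ∈ A_k} ∑_{i ∈ S} α_i = min (d − k) (max_{β ∈ A} ∑_{i ∈ S} β_i)`. -/
theorem truncation_eq_derivative_polymatroid {n : ℕ} (d k : ℕ) (hk : k ≤ d)
    (A : Finset (Fin n → ℕ)) (hA : A.Nonempty)
    (hdeg : ∀ α ∈ A, ∑ i, α i = d) (S : Finset (Fin n)) :
    ((A.biUnion fun β => (Finset.Iic β).filter fun α => ∑ i, α i = d - k).sup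
        fun α => ∑ i ∈ S, α i) =
      min (d - k) (A.sup fun β => ∑ i ∈ S, β i) :=
  truncation_eq_derivative_polymatroid_general d k A hdeg S
end

section
/- Let A ⊆ (ℤ_{≥0})^n be a nonempty finite M-convex set with Σ_{i=1}^n αᵢ = d for every α ∈ A, and define ρ(S) = max_{α∈A} Σ_{i∈S} αᵢ for S ⊆ [n], with truncations ρ_k(S) = min(d−k, ρ(S)). Then for every 0 ≤ k ≤ d, the set of integer points of the base polytope B(ρ_k), i.e. the set of α ∈ (ℤ_{≥0})^n with Σ_{i∈S} αᵢ ≤ ρ_k(S) for all S ⊆ [n] and Σ_{i=1}^n αᵢ = d−k, is exactly A_k = {α ∈ (ℤ_{≥0})^n : Σ_{i=1}^n αᵢ = d−k and α ≤ β componentwise for some β ∈ A}. -/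
/-!
Take `y ∈ A` as close as possible to dominating `α`, i.e. minimising the total deficit
`∑ (α − y)⁺`. If some `α j > y j`, consider the set `T` of indices `i` for which
`y + δⱼ − δᵢ ∈ A`. Minimality forces `y ≤ α` on `T`, and `j ∈ T`, so `α(T) > y(T)`.
On the other hand M-convexity makes `T` closed under further exchanges, and from this one
shows that `T` is tight at `y`: `y(T) = ρ(T)`. Hence `α(T) > ρ(T)`, so `α ∉ B(ρ_k)`.
-/

/-- A finite set `A ⊆ ℤⁿ` is M-convex: for all `x, y ∈ A` and every index `i` with
`x i > y i` there is an index `j` with `x j < y j` such that `x − δᵢ + δⱼ ∈ A` and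
`y + δᵢ − δⱼ ∈ A`. -/
def MConvex {n : ℕ} (A : Finset (Fin n → ℤ)) : Prop :=
  ∀ x ∈ A, ∀ y ∈ A, ∀ i : Fin n, y i < x i →
    ∃ j : Fin n, x j < y j ∧
      x - Pi.single i 1 + Pi.single j 1 ∈ A ∧
      y + Pi.single i 1 - Pi.single j 1 ∈ A

/-- `ρ(S) = max_{α ∈ A} ∑_{i ∈ S} α_i`. -/
def rhoOf {n : ℕ} (A : Finset (Fin n → ℤ)) (hA : A.Nonempty)
    (S : Finset (Fin n)) : ℤ :=
  A.sup' hA fun α => ∑ i ∈ S, α i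

open Finset

section Exchange

variable {ι : Type*} [DecidableEq ι]

theorem sum_toNat_sub_add_single_sub_single_lt [Fintype ι] {f g : ι → ℤ} {i j : ι}
    (hj : g j < f j) (hi : f i < g i) :
    ∑ m, (f m - (g + Pi.single j 1 - Pi.single i 1 : ι → ℤ) m).toNat < ∑ m, (f m - g m).toNat := by
  have hij : i ≠ j := by rintro rfl; omega
  apply Finset.sum_lt_sum
  · intro m _
    rcases eq_or_ne m i with rfl | hmi
    · simp only [Pi.add_apply, Pi.sub_apply, Pi.single_eq_same, Pi.single_apply, hij, if_false]
      omega
    rcases eq_or_ne m j with rfl | hmj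
    · simp only [Pi.add_apply, Pi.sub_apply, Pi.single_eq_same, Pi.single_apply, hij.symm, if_false]
      omega
    · simp [hmi, hmj]
  · refine ⟨j, mem_univ j, ?_⟩
    simp only [Pi.add_apply, Pi.sub_apply, Pi.single_eq_same, Pi.single_apply, hij.symm, if_false]
    omega

theorem sum_add_single_sub_single {G : Type*} [AddCommGroup G] (f : ι → G) (c : G)
    {s : Finset ι} {i j : ι} (hi : i ∈ s) (hj : j ∈ s) :
    ∑ m ∈ s, (f + Pi.single j c - Pi.single i c : ι → G) m = ∑ m ∈ s, f m := by
  simp only [Pi.add_apply, Pi.sub_apply]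
  rw [sum_sub_distrib, sum_add_distrib, sum_pi_single' j c s, sum_pi_single' i c s,
    if_pos hi, if_pos hj, add_sub_cancel_right]

end Exchange

section ExchangeSet

variable {n : ℕ} {A : Finset (Fin n → ℤ)} {y : Fin n → ℤ} {i j l : Fin n}

def exchangeSet (A : Finset (Fin n → ℤ)) (y : Fin n → ℤ) (j : Fin n) : Finset (Fin n) :=
  univ.filter fun i => y + Pi.single j 1 - Pi.single i 1 ∈ A

theorem mem_exchangeSet : i ∈ exchangeSet A y j ↔ y + Pi.single j 1 - Pi.single i 1 ∈ A := by
  simp [exchangeSet]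

theorem mem_exchangeSet_self (hy : y ∈ A) : j ∈ exchangeSet A y j := by
  rwa [mem_exchangeSet, add_sub_cancel_right]

theorem MConvex.mem_exchangeSet_of_exchange (hM : MConvex A) (hy : y ∈ A)
    (hi : i ∈ exchangeSet A y j) (hil : y + Pi.single i 1 - Pi.single l 1 ∈ A) :
    l ∈ exchangeSet A y j := by
  rcases eq_or_ne i j with rfl | hij
  · exact mem_exchangeSet.2 hil
  rcases eq_or_ne l j with rfl | hlj
  · exact mem_exchangeSet_self hy
  rcases eq_or_ne i l with rfl | hil'
  · exact hi
  rw [mem_exchangeSet] at hi ⊢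
  -- exchange `v = y + δᵢ − δₗ` against `w = y + δⱼ − δᵢ` at `i`; `v < w` only at `j` and `l`
  have hvw : (y + Pi.single j 1 - Pi.single i 1 : Fin n → ℤ) i <
      (y + Pi.single i 1 - Pi.single l 1 : Fin n → ℤ) i := by
    simp only [Pi.add_apply, Pi.sub_apply, Pi.single_eq_same, Pi.single_apply, hij, hil', if_false]
    omega
  obtain ⟨m, hm, hvm, hwm⟩ := hM _ hil _ hi i hvw
  have hmjl : m = j ∨ m = l := by
    by_contra! hmjl
    rcases eq_or_ne m i with rfl | hmi
    · simp [hmjl.1, hmjl.2] at hm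
      omega
    · simp [hmjl.1, hmjl.2, hmi] at hm
  rcases hmjl with rfl | rfl
  · convert hvm using 1; abel
  · convert hwm using 1; abel

theorem MConvex.sum_exchangeSet_le (hM : MConvex A) (hy : y ∈ A) {z : Fin n → ℤ} (hz : z ∈ A) :
    ∑ m ∈ exchangeSet A y j, z m ≤ ∑ m ∈ exchangeSet A y j, y m := by
  set T := exchangeSet A y j
  -- a counterexample nearest to `y` is moved one step closer by an exchange inside `T`
  by_contra! hzT
  obtain ⟨z, hz, hmin⟩ := exists_min_image (A.filter fun w => ∑ m ∈ T, y m < ∑ m ∈ T, w m)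
    (fun w => ∑ m, (y m - w m).toNat) ⟨z, mem_filter.2 ⟨hz, hzT⟩⟩
  obtain ⟨hzA, hzT⟩ := mem_filter.1 hz
  obtain ⟨i, hiT, hyz⟩ := exists_lt_of_sum_lt hzT
  obtain ⟨l, hzy, hz', hy'⟩ := hM z hzA y hy i hyz
  have hlT : l ∈ T := hM.mem_exchangeSet_of_exchange hy hiT hy'
  rw [sub_add_eq_add_sub] at hz'
  have hcloser := hmin _ <| mem_filter.2 ⟨hz', by rwa [sum_add_single_sub_single z 1 hiT hlT]⟩
  have := sum_toNat_sub_add_single_sub_single_lt hzy hyz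
  omega

theorem MConvex.rhoOf_exchangeSet (hM : MConvex A) (hA : A.Nonempty) (hy : y ∈ A) :
    rhoOf A hA (exchangeSet A y j) = ∑ m ∈ exchangeSet A y j, y m :=
  le_antisymm (sup'_le _ _ fun _ hz => hM.sum_exchangeSet_le hy hz) (le_sup' _ hy)

end ExchangeSet

theorem sum_le_rhoOf_of_le {n : ℕ} {A : Finset (Fin n → ℤ)} (hA : A.Nonempty)
    {α β : Fin n → ℤ} (hβ : β ∈ A) (hαβ : α ≤ β) (S : Finset (Fin n)) :
    ∑ i ∈ S, α i ≤ rhoOf A hA S :=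
  (sum_le_sum fun i _ => hαβ i).trans (le_sup' (fun z => ∑ i ∈ S, z i) hβ)

theorem MConvex.exists_ge_of_sum_le_rhoOf {n : ℕ} {A : Finset (Fin n → ℤ)} (hM : MConvex A)
    (hA : A.Nonempty) {α : Fin n → ℤ} (hα : ∀ S, ∑ i ∈ S, α i ≤ rhoOf A hA S) :
    ∃ β ∈ A, α ≤ β := by
  obtain ⟨y, hy, hmin⟩ := exists_min_image A (fun w => ∑ m, (α m - w m).toNat) hA
  refine ⟨y, hy, fun j => ?_⟩
  by_contra! hj
  have hyα : ∀ i ∈ exchangeSet A y j, y i ≤ α i := by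
    intro i hi
    by_contra! hαi
    have := hmin _ (mem_exchangeSet.1 hi)
    have := sum_toNat_sub_add_single_sub_single_lt hj hαi
    omega
  have hlt := sum_lt_sum hyα ⟨j, mem_exchangeSet_self hy, hj⟩
  have hle := hα (exchangeSet A y j)
  rw [hM.rhoOf_exchangeSet hA hy] at hle
  omega

theorem latticePoints_basePolytope_truncation_general {n : ℕ} (d k : ℕ)
    (A : Finset (Fin n → ℤ)) (hA : A.Nonempty)
    (hM : MConvex A) :
    {α : Fin n → ℤ | (∀ i, 0 ≤ α i) ∧
        (∀ S : Finset (Fin n), ∑ i ∈ S, α i ≤ min ((d : ℤ) - k) (rhoOf A hA S)) ∧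
        ∑ i, α i = (d : ℤ) - k} =
      {α : Fin n → ℤ | (∀ i, 0 ≤ α i) ∧ ∑ i, α i = (d : ℤ) - k ∧
        ∃ β ∈ A, α ≤ β} := by
  ext α
  simp only [Set.mem_ofPred_eq, le_min_iff]
  constructor
  · rintro ⟨hα, hS, hsum⟩
    exact ⟨hα, hsum, hM.exists_ge_of_sum_le_rhoOf hA fun S => (hS S).2⟩
  · rintro ⟨hα, hsum, β, hβ, hαβ⟩
    refine ⟨hα, fun S => ⟨?_, sum_le_rhoOf_of_le hA hβ hαβ S⟩, hsum⟩
    rw [← hsum]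
    exact sum_le_sum_of_subset_of_nonneg (subset_univ S) fun i _ _ => hα i

/-- Let `A ⊆ (ℤ_{≥0})ⁿ` be a nonempty finite M-convex set of vectors of coordinate sum
`d`, with `ρ(S) = max_{α∈A} ∑_{i∈S} α_i` and truncations `ρ_k(S) = min (d−k) (ρ S)`.
For `0 ≤ k ≤ d`, the integer points of the base polytope `B(ρ_k)` are exactly
`A_k = {α ∈ (ℤ_{≥0})ⁿ : ∑ α_i = d−k and α ≤ β componentwise for some β ∈ A}`. -/
theorem latticePoints_basePolytope_truncation {n : ℕ} (d k : ℕ) (hk : k ≤ d)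
    (A : Finset (Fin n → ℤ)) (hA : A.Nonempty)
    (hpos : ∀ α ∈ A, ∀ i, 0 ≤ α i)
    (hdeg : ∀ α ∈ A, ∑ i, α i = (d : ℤ))
    (hM : MConvex A) :
    {α : Fin n → ℤ | (∀ i, 0 ≤ α i) ∧
        (∀ S : Finset (Fin n), ∑ i ∈ S, α i ≤ min ((d : ℤ) - k) (rhoOf A hA S)) ∧
        ∑ i, α i = (d : ℤ) - k} =
      {α : Fin n → ℤ | (∀ i, 0 ≤ α i) ∧ ∑ i, α i = (d : ℤ) - k ∧
        ∃ β ∈ A, α ≤ β} :=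
  latticePoints_basePolytope_truncation_general d k A hA hM
end

section
/- Let A ⊆ (ℤ_{≥0})^n be a nonempty finite M-convex set with Σ_{i=1}^n αᵢ = d for every α ∈ A. Then the function ρ : 2^{[n]} → ℤ_{≥0} defined by ρ(S) = max_{α∈A} Σ_{i∈S} αᵢ is a polymatroid of rank d; that is, ρ(∅) = 0, ρ(S) ≤ ρ(T) whenever S ⊆ T, ρ(S∪T) + ρ(S∩T) ≤ ρ(S) + ρ(T) for all S, T ⊆ [n], and ρ([n]) = d. -/
/-!
Submodularity is the only nontrivial axiom. Among pairs `(x, y)` in `A` with `x` maximizing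
the sum over `S ∪ T` and `y` maximizing the sum over `S ∩ T`, take one with `∑ₖ |xₖ - yₖ|`
minimal. If `yᵢ < xᵢ` for some `i ∈ T \ S`, the exchange axiom yields `j` with `xⱼ < yⱼ`;
moving a unit from `i` to `j` in `x` (when `j ∈ S`) or from `j` to `i` in `y` (when `j ∉ S`)
keeps the pair maximizing and lowers the distance by `2`. Hence `x ≤ y` on `T \ S`, and
`x(S ∪ T) + y(S ∩ T) ≤ x(S) + y(T) ≤ ρ(S) + ρ(T)`.
-/

open Finset

section Exchange

variable {ι : Type*} [DecidableEq ι]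

theorem sum_abs_sub_single_add_single [Fintype ι] {v : ι → ℤ} {i j : ι} (hi : 0 < v i)
    (hj : v j < 0) :
    ∑ k, |(v - Pi.single i 1 + Pi.single j 1 : ι → ℤ) k| = ∑ k, |v k| - 2 := by
  have hij : i ≠ j := by rintro rfl; omega
  have hpoint : ∀ k, |(v - Pi.single i 1 + Pi.single j 1 : ι → ℤ) k|
      = |v k| - (Pi.single i 1 : ι → ℤ) k - (Pi.single j 1 : ι → ℤ) k := by
    intro k
    rcases eq_or_ne k i with rfl | hki
    · simp only [Pi.add_apply, Pi.sub_apply, Pi.single_eq_same, Pi.single_eq_of_ne hij]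
      rw [abs_of_pos hi, abs_of_nonneg (by omega)]
      ring
    rcases eq_or_ne k j with rfl | hkj
    · simp only [Pi.add_apply, Pi.sub_apply, Pi.single_eq_same, Pi.single_eq_of_ne hki]
      rw [abs_of_neg hj, abs_of_nonpos (by omega)]
      ring
    · simp [Pi.single_eq_of_ne hki, Pi.single_eq_of_ne hkj]
  simp only [hpoint, sum_sub_distrib, sum_pi_single', mem_univ, if_true]
  ring

theorem sum_sub_single_add_single_of_mem {U : Finset ι} (x : ι → ℤ) {i j : ι}
    (hi : i ∈ U) (hj : j ∈ U) :
    ∑ k ∈ U, (x - Pi.single i 1 + Pi.single j 1 : ι → ℤ) k = ∑ k ∈ U, x k := by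
  simp [sum_add_distrib, sum_sub_distrib, sum_pi_single', hi, hj]

theorem sum_add_single_sub_single_of_notMem {U : Finset ι} (y : ι → ℤ) {i j : ι}
    (hi : i ∉ U) (hj : j ∉ U) :
    ∑ k ∈ U, (y + Pi.single i 1 - Pi.single j 1 : ι → ℤ) k = ∑ k ∈ U, y k := by
  simp [sum_add_distrib, sum_sub_distrib, sum_pi_single', hi, hj]

end Exchange

section Rho

variable {n : ℕ} {A : Finset (Fin n → ℤ)} (hA : A.Nonempty)

theorem sum_le_rhoOf {α : Fin n → ℤ} (hα : α ∈ A) (S : Finset (Fin n)) :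
    ∑ i ∈ S, α i ≤ rhoOf A hA S :=
  le_sup' (fun α => ∑ i ∈ S, α i) hα

theorem rhoOf_empty : rhoOf A hA ∅ = 0 := by
  simp [rhoOf]

theorem rhoOf_mono (hpos : ∀ α ∈ A, ∀ i, 0 ≤ α i) {S T : Finset (Fin n)} (hST : S ⊆ T) :
    rhoOf A hA S ≤ rhoOf A hA T :=
  sup'_le _ _ fun α hα =>
    (sum_le_sum_of_subset_of_nonneg hST fun i _ _ => hpos α hα i).trans (sum_le_rhoOf hA hα T)

theorem rhoOf_nonneg (hpos : ∀ α ∈ A, ∀ i, 0 ≤ α i) (S : Finset (Fin n)) :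
    0 ≤ rhoOf A hA S :=
  rhoOf_empty hA ▸ rhoOf_mono hA hpos S.empty_subset

theorem rhoOf_univ {d : ℤ} (hdeg : ∀ α ∈ A, ∑ i, α i = d) : rhoOf A hA univ = d := by
  obtain ⟨α, hα⟩ := hA
  exact le_antisymm (sup'_le _ _ fun β hβ => (hdeg β hβ).le)
    (hdeg α hα ▸ sum_le_rhoOf _ hα _)

theorem MConvex.exists_maximizers_le_on_sdiff (hM : MConvex A) (S T : Finset (Fin n)) :
    ∃ x ∈ A, ∃ y ∈ A, ∑ i ∈ S ∪ T, x i = rhoOf A hA (S ∪ T) ∧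
      ∑ i ∈ S ∩ T, y i = rhoOf A hA (S ∩ T) ∧ ∀ i ∈ T \ S, x i ≤ y i := by
  set P := (A ×ˢ A).filter fun p : (Fin n → ℤ) × (Fin n → ℤ) =>
    ∑ i ∈ S ∪ T, p.1 i = rhoOf A hA (S ∪ T) ∧
      ∑ i ∈ S ∩ T, p.2 i = rhoOf A hA (S ∩ T)
  have hP : P.Nonempty := by
    obtain ⟨x, hxA, hx⟩ := exists_mem_eq_sup' hA fun α => ∑ i ∈ S ∪ T, α i
    obtain ⟨y, hyA, hy⟩ := exists_mem_eq_sup' hA fun α => ∑ i ∈ S ∩ T, α i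
    exact ⟨(x, y), mem_filter.2 ⟨mem_product.2 ⟨hxA, hyA⟩, hx.symm, hy.symm⟩⟩
  obtain ⟨⟨x, y⟩, hxyP, hmin⟩ := exists_min_image P (fun p => ∑ k, |(p.1 - p.2) k|) hP
  obtain ⟨hxyA, hx, hy⟩ := mem_filter.1 hxyP
  obtain ⟨hxA, hyA⟩ := mem_product.1 hxyA
  refine ⟨x, hxA, y, hyA, hx, hy, fun i hi => not_lt.1 fun hyx => ?_⟩
  obtain ⟨hiT, hiS⟩ := mem_sdiff.1 hi
  obtain ⟨j, hxj, hx'A, hy'A⟩ := hM x hxA y hyA i hyx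
  have hdist : ∑ k, |((x - y) - Pi.single i 1 + Pi.single j 1 : Fin n → ℤ) k|
      < ∑ k, |(x - y) k| := by
    rw [sum_abs_sub_single_add_single (by simpa using hyx) (by simpa using hxj)]
    omega
  by_cases hjS : j ∈ S
  · have hmem : (x - Pi.single i 1 + Pi.single j 1, y) ∈ P := mem_filter.2
      ⟨mem_product.2 ⟨hx'A, hyA⟩, by
        rw [sum_sub_single_add_single_of_mem x (mem_union_right S hiT) (mem_union_left T hjS), hx],
        hy⟩
    have hswap : x - Pi.single i 1 + Pi.single j 1 - y
        = (x - y) - Pi.single i 1 + Pi.single j 1 := by abel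
    exact hdist.not_ge (by simpa only [hswap] using hmin _ hmem)
  · have hmem : (x, y + Pi.single i 1 - Pi.single j 1) ∈ P := mem_filter.2
      ⟨mem_product.2 ⟨hxA, hy'A⟩, hx, by
        rw [sum_add_single_sub_single_of_notMem y (fun h => hiS (mem_inter.1 h).1)
          (fun h => hjS (mem_inter.1 h).1), hy]⟩
    have hswap : x - (y + Pi.single i 1 - Pi.single j 1)
        = (x - y) - Pi.single i 1 + Pi.single j 1 := by abel
    exact hdist.not_ge (by simpa only [hswap] using hmin _ hmem)

theorem MConvex.rhoOf_union_add_rhoOf_inter_le (hM : MConvex A) (S T : Finset (Fin n)) :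
    rhoOf A hA (S ∪ T) + rhoOf A hA (S ∩ T) ≤ rhoOf A hA S + rhoOf A hA T := by
  obtain ⟨x, hxA, y, hyA, hx, hy, hxy⟩ := hM.exists_maximizers_le_on_sdiff hA S T
  have hxsplit : ∑ k ∈ S ∪ T, x k = ∑ k ∈ S, x k + ∑ k ∈ T \ S, x k := by
    rw [← union_sdiff_self_eq_union, sum_union disjoint_sdiff]
  have hysplit : ∑ k ∈ T, y k = ∑ k ∈ T \ S, y k + ∑ k ∈ S ∩ T, y k := by
    rw [inter_comm, add_comm, sum_inter_add_sum_sdiff]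
  calc rhoOf A hA (S ∪ T) + rhoOf A hA (S ∩ T)
      = ∑ k ∈ S, x k + ∑ k ∈ T \ S, x k + ∑ k ∈ S ∩ T, y k := by rw [← hx, ← hy, hxsplit]
    _ ≤ ∑ k ∈ S, x k + ∑ k ∈ T, y k := by
      rw [hysplit, ← add_assoc]
      gcongr with k hk
      exact hxy k hk
    _ ≤ rhoOf A hA S + rhoOf A hA T :=
      add_le_add (sum_le_rhoOf hA hxA S) (sum_le_rhoOf hA hyA T)

end Rho

/-- Let `A ⊆ (ℤ_{≥0})ⁿ` be a nonempty finite M-convex set of vectors of coordinate sum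
`d`.  Then `ρ(S) = max_{α∈A} ∑_{i∈S} α_i` is a polymatroid of rank `d`: it takes
nonnegative values, vanishes on the empty set, is monotone under inclusion, is
submodular, and `ρ([n]) = d`. -/
theorem rho_isPolymatroid {n : ℕ} (d : ℕ)
    (A : Finset (Fin n → ℤ)) (hA : A.Nonempty)
    (hpos : ∀ α ∈ A, ∀ i, 0 ≤ α i)
    (hdeg : ∀ α ∈ A, ∑ i, α i = (d : ℤ))
    (hM : MConvex A) :
    rhoOf A hA ∅ = 0 ∧
    (∀ S, 0 ≤ rhoOf A hA S) ∧
    (∀ S T, S ⊆ T → rhoOf A hA S ≤ rhoOf A hA T) ∧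
    (∀ S T, rhoOf A hA (S ∪ T) + rhoOf A hA (S ∩ T) ≤ rhoOf A hA S + rhoOf A hA T) ∧
    rhoOf A hA Finset.univ = (d : ℤ) :=
  ⟨rhoOf_empty hA, rhoOf_nonneg hA hpos, fun _ _ => rhoOf_mono hA hpos,
    hM.rhoOf_union_add_rhoOf_inter_le hA, rhoOf_univ hA hdeg⟩
end

section
/- Let A ⊆ (ℤ_{≥0})^n be a nonempty finite M-convex set with Σ_{i=1}^n αᵢ = d for every α ∈ A, and let ρ(S) = max_{α∈A} Σ_{i∈S} αᵢ for S ⊆ [n]. Then the convex hull of A in ℝ^n equals the base polytope B(ρ), and A = B(ρ) ∩ ℤ^n. -/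
open Finset

theorem Finset.sum_sub_mul_nonpos_of_sum_superlevel_nonpos {ι R : Type*} [DecidableEq ι]
    [CommRing R] [LinearOrder R] [IsStrictOrderedRing R] (w y : ι → R) (s : Finset ι) {c : R}
    (hc : ∀ i ∈ s, c ≤ w i) (hy : ∀ θ, c < θ → ∑ i ∈ s with θ ≤ w i, y i ≤ 0) :
    ∑ i ∈ s, (w i - c) * y i ≤ 0 := by
  induction s using Finset.induction_on_min_value w generalizing c with
  | empty => simp
  | insert a s ha hmin ih =>
    have hs : ∑ i ∈ s, (w i - w a) * y i ≤ 0 := by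
      refine ih (fun i hi => hmin i hi) fun θ hθ => ?_
      have := hy θ (lt_of_le_of_lt (hc a (mem_insert_self a s)) hθ)
      rwa [filter_insert, if_neg hθ.not_ge] at this
    have ha' : (w a - c) * ∑ i ∈ insert a s, y i ≤ 0 := by
      rcases (hc a (mem_insert_self a s)).eq_or_lt with hca | hca
      · simp [hca]
      · refine mul_nonpos_of_nonneg_of_nonpos (sub_nonneg.2 hca.le) ?_
        have := hy (w a) hca
        rwa [filter_true_of_mem] at this
        simpa using hmin
    calc ∑ i ∈ insert a s, (w i - c) * y i
        = ∑ i ∈ s, (w i - w a) * y i + (w a - c) * ∑ i ∈ insert a s, y i := by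
          have hsplit : ∑ i ∈ s, (w i - c) * y i
              = ∑ i ∈ s, (w i - w a) * y i + ∑ i ∈ s, (w a - c) * y i := by
            rw [← sum_add_distrib]
            exact sum_congr rfl fun i _ => by ring
          rw [sum_insert ha, sum_insert ha, mul_add, mul_sum, hsplit]
          ring
      _ ≤ 0 := add_nonpos hs ha'

theorem convex_basePolytope_s11 {ι : Type*} [Fintype ι] (r : Finset ι → ℝ) (d : ℝ) :
    Convex ℝ {x : ι → ℝ | (∀ i, 0 ≤ x i) ∧ (∀ S, ∑ i ∈ S, x i ≤ r S) ∧ ∑ i, x i = d} := by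
  rintro x ⟨hx0, hxS, hxd⟩ y ⟨hy0, hyS, hyd⟩ a b ha hb hab
  simp only [Set.mem_ofPred_eq, Pi.add_apply, Pi.smul_apply, smul_eq_mul, sum_add_distrib,
    ← mul_sum]
  refine ⟨fun i => by have := hx0 i; have := hy0 i; positivity, fun S => ?_, ?_⟩
  · calc a * ∑ i ∈ S, x i + b * ∑ i ∈ S, y i ≤ a * r S + b * r S := by
          gcongr
          exacts [hxS S, hyS S]
      _ = r S := by rw [← add_mul, hab, one_mul]
  · rw [hxd, hyd, ← add_mul, hab, one_mul]

variable {n : ℕ}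

lemma sum_sub_single_add_single (x : Fin n → ℤ) (i j : Fin n) (S : Finset (Fin n)) :
    ∑ k ∈ S, (x - Pi.single i 1 + Pi.single j 1 : Fin n → ℤ) k
      = ∑ k ∈ S, x k - (if i ∈ S then 1 else 0) + (if j ∈ S then 1 else 0) := by
  simp [sum_add_distrib, sum_sub_distrib, sum_pi_single']

lemma sum_add_single_sub_single_s11 (x : Fin n → ℤ) (i j : Fin n) (S : Finset (Fin n)) :
    ∑ k ∈ S, (x + Pi.single i 1 - Pi.single j 1 : Fin n → ℤ) k
      = ∑ k ∈ S, x k + (if i ∈ S then 1 else 0) - (if j ∈ S then 1 else 0) := by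
  simp [sum_add_distrib, sum_sub_distrib, sum_pi_single']

lemma sum_mul_add_single_sub_single (w : Fin n → ℝ) (x : Fin n → ℤ) (i j : Fin n) :
    ∑ k, w k * ((x + Pi.single i 1 - Pi.single j 1 : Fin n → ℤ) k : ℝ)
      = ∑ k, w k * (x k : ℝ) + w i - w j := by
  simp [Pi.single_apply, mul_add, mul_sub, sum_add_distrib, sum_sub_distrib]

def l1Dist (a b : Fin n → ℤ) : ℤ := ∑ k, |a k - b k|

lemma l1Dist_sub_single_add_single {a b : Fin n → ℤ} {i j : Fin n} (hi : b i < a i)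
    (hj : a j < b j) : l1Dist (a - Pi.single i 1 + Pi.single j 1) b + 2 = l1Dist a b := by
  have hij : i ≠ j := by rintro rfl; omega
  have hk : ∀ k, |(a - Pi.single i 1 + Pi.single j 1 : Fin n → ℤ) k - b k|
      + ((if k = i then 1 else 0) + (if k = j then 1 else 0)) = |a k - b k| := by
    intro k
    simp only [Pi.add_apply, Pi.sub_apply, Pi.single_apply]
    split_ifs with hki hkj hkj
    · exact absurd (hki.symm.trans hkj) hij
    · subst hki; rw [abs_of_nonneg (by omega), abs_of_pos (by omega)]; ring
    · subst hkj; rw [abs_of_nonpos (by omega), abs_of_neg (by omega)]; ring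
    · simp
  simp only [l1Dist, ← sum_congr rfl fun k _ => hk k, sum_add_distrib, sum_ite_eq', mem_univ,
    if_true]
  ring

def maxFace (A : Finset (Fin n → ℤ)) (S : Finset (Fin n)) : Finset (Fin n → ℤ) :=
  {α ∈ A | ∀ β ∈ A, ∑ k ∈ S, β k ≤ ∑ k ∈ S, α k}

lemma mem_maxFace {A : Finset (Fin n → ℤ)} {S : Finset (Fin n)} {α : Fin n → ℤ} :
    α ∈ maxFace A S ↔ α ∈ A ∧ ∀ β ∈ A, ∑ k ∈ S, β k ≤ ∑ k ∈ S, α k :=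
  mem_filter

lemma maxFace_nonempty {A : Finset (Fin n → ℤ)} (hA : A.Nonempty) (S : Finset (Fin n)) :
    (maxFace A S).Nonempty := by
  obtain ⟨α, hα, hmax⟩ := A.exists_max_image (fun β => ∑ k ∈ S, β k) hA
  exact ⟨α, mem_maxFace.2 ⟨hα, hmax⟩⟩

lemma rhoOf_eq_of_mem_maxFace {A : Finset (Fin n → ℤ)} (hA : A.Nonempty) {S : Finset (Fin n)}
    {α : Fin n → ℤ} (hα : α ∈ maxFace A S) : rhoOf A hA S = ∑ k ∈ S, α k :=
  le_antisymm (sup'_le hA _ (mem_maxFace.1 hα).2) (le_sup' _ (mem_maxFace.1 hα).1)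

namespace MConvex

variable {A : Finset (Fin n → ℤ)}

theorem mconvex_maxFace (hM : MConvex A) (S : Finset (Fin n)) : MConvex (maxFace A S) := by
  intro x hx y hy i hi
  obtain ⟨hxA, hxmax⟩ := mem_maxFace.1 hx
  obtain ⟨hyA, hymax⟩ := mem_maxFace.1 hy
  obtain ⟨j, hj, hx', hy'⟩ := hM x hxA y hyA i hi
  have h1 := hxmax _ hx'
  have h2 := hymax _ hy'
  simp only [sum_sub_single_add_single, sum_add_single_sub_single_s11] at h1 h2
  refine ⟨j, hj, mem_maxFace.2 ⟨hx', fun β hβ => ?_⟩, mem_maxFace.2 ⟨hy', fun β hβ => ?_⟩⟩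
  · have := hxmax β hβ
    simp only [sum_sub_single_add_single]
    split_ifs at h1 h2 ⊢ <;> omega
  · have := hymax β hβ
    simp only [sum_add_single_sub_single_s11]
    split_ifs at h1 h2 ⊢ <;> omega

theorem filter_apply_eq (hM : MConvex A) (i : Fin n) (c : ℤ) :
    MConvex {α ∈ A | α i = c} := by
  intro x hx y hy k hk
  obtain ⟨hxA, hxi⟩ := mem_filter.1 hx
  obtain ⟨hyA, hyi⟩ := mem_filter.1 hy
  obtain ⟨j, hj, hx', hy'⟩ := hM x hxA y hyA k hk
  have hki : i ≠ k := by rintro rfl; omega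
  have hji : i ≠ j := by rintro rfl; omega
  exact ⟨j, hj, mem_filter.2 ⟨hx', by simp [hki, hji, hxi]⟩,
    mem_filter.2 ⟨hy', by simp [hki, hji, hyi]⟩⟩

theorem exists_apply_eq (hM : MConvex A) {β γ : Fin n → ℤ} (hβ : β ∈ A) (hγ : γ ∈ A)
    {i : Fin n} {c : ℤ} (hγc : γ i ≤ c) (hcβ : c ≤ β i) : ∃ δ ∈ A, δ i = c := by
  obtain ⟨δ, hδ, hmin⟩ :=
    exists_min_image {δ ∈ A | c ≤ δ i} (fun δ => δ i) ⟨β, mem_filter.2 ⟨hβ, hcβ⟩⟩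
  obtain ⟨hδA, hcδ⟩ := mem_filter.1 hδ
  refine ⟨δ, hδA, le_antisymm (not_lt.1 fun hlt => ?_) hcδ⟩
  obtain ⟨j, hj, hδ', -⟩ := hM δ hδA γ hγ i (by omega)
  have hji : i ≠ j := by rintro rfl; omega
  have := hmin _ (mem_filter.2 ⟨hδ', by simp [hji]; omega⟩)
  simp [hji] at this

theorem exists_add_single_sub_single_mem (hM : MConvex A) {α β : Fin n → ℤ} (hα : α ∈ A)
    (hβ : β ∈ A) {S : Finset (Fin n)} (hlt : ∑ k ∈ S, α k < ∑ k ∈ S, β k) :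
    ∃ i ∈ S, ∃ j ∉ S, α + Pi.single i 1 - Pi.single j 1 ∈ A := by
  obtain ⟨γ, hγ, hmin⟩ := exists_min_image _ (fun γ => l1Dist γ α) (maxFace_nonempty ⟨α, hα⟩ S)
  obtain ⟨hγA, hγmax⟩ := mem_maxFace.1 hγ
  obtain ⟨i, hiS, hi⟩ := exists_lt_of_sum_lt (hlt.trans_le (hγmax β hβ))
  obtain ⟨j, hj, hγ', hα'⟩ := hM γ hγA α hα i hi
  refine ⟨i, hiS, j, fun hjS => ?_, hα'⟩
  have hγ'face : γ - Pi.single i 1 + Pi.single j 1 ∈ maxFace A S := by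
    refine mem_maxFace.2 ⟨hγ', fun δ hδ => ?_⟩
    rw [sum_sub_single_add_single, if_pos hiS, if_pos hjS, sub_add_cancel]
    exact hγmax δ hδ
  have := hmin _ hγ'face
  have := l1Dist_sub_single_add_single hi hj
  omega

theorem exists_mem_maxFace_of_subset (hM : MConvex A) (hA : A.Nonempty) {S T : Finset (Fin n)}
    (hST : S ⊆ T) : ∃ α ∈ maxFace A T, α ∈ maxFace A S := by
  obtain ⟨α, hαT, hmax⟩ :=
    exists_max_image _ (fun α => ∑ k ∈ S, α k) (maxFace_nonempty hA T)
  obtain ⟨hαA, hαmax⟩ := mem_maxFace.1 hαT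
  refine ⟨α, hαT, mem_maxFace.2 ⟨hαA, fun β hβ => not_lt.1 fun hlt => ?_⟩⟩
  obtain ⟨i, hiS, j, hjS, hα'⟩ := hM.exists_add_single_sub_single_mem hαA hβ hlt
  have hT := hαmax _ hα'
  simp only [sum_add_single_sub_single_s11, if_pos (hST hiS)] at hT
  have hjT : j ∈ T := by by_contra hjT; rw [if_neg hjT] at hT; omega
  have hα'T : α + Pi.single i 1 - Pi.single j 1 ∈ maxFace A T := by
    refine mem_maxFace.2 ⟨hα', fun δ hδ => ?_⟩
    rw [sum_add_single_sub_single_s11, if_pos (hST hiS), if_pos hjT, add_sub_cancel_right]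
    exact hαmax δ hδ
  have := hmax _ hα'T
  rw [sum_add_single_sub_single_s11, if_pos hiS, if_neg hjS] at this
  omega

-- The sums of the slice `{γ ∈ A | γ i = σ i}` over `S` reach `min (ρ S) (ρ (insert i S) - σ i)`.
theorem exists_apply_eq_and_le_sum (hM : MConvex A) {d : ℤ} (hdeg : ∀ α ∈ A, ∑ k, α k = d)
    {σ : Fin n → ℤ} (hσ : σ ∈ A) {i : Fin n} {S : Finset (Fin n)} (hiS : i ∉ S) {t : ℤ}
    (hS : ∃ α ∈ A, t ≤ ∑ k ∈ S, α k) (hinsert : ∃ α ∈ A, t + σ i ≤ ∑ k ∈ insert i S, α k) :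
    ∃ γ ∈ A, γ i = σ i ∧ t ≤ ∑ k ∈ S, γ k := by
  have hA : A.Nonempty := ⟨σ, hσ⟩
  obtain ⟨β, hβ, hβS⟩ := hM.exists_mem_maxFace_of_subset hA (subset_insert i S)
  rcases le_total (σ i) (β i) with hσβ | hβσ
  · obtain ⟨γ₀, hγ₀, hγ₀S⟩ := hM.exists_mem_maxFace_of_subset hA
      (fun k hk => mem_erase.2 ⟨fun hki => hiS (hki ▸ hk), mem_univ k⟩ : S ⊆ univ.erase i)
    have hγ₀σ : γ₀ i ≤ σ i := by
      have := (mem_maxFace.1 hγ₀).2 σ hσ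
      have := add_sum_erase univ σ (mem_univ i)
      have := add_sum_erase univ γ₀ (mem_univ i)
      have := hdeg σ hσ
      have := hdeg γ₀ (mem_maxFace.1 hγ₀).1
      omega
    obtain ⟨γ, hγ, hγi⟩ := (hM.mconvex_maxFace S).exists_apply_eq hβS hγ₀S hγ₀σ hσβ
    obtain ⟨α, hα, ht⟩ := hS
    exact ⟨γ, (mem_maxFace.1 hγ).1, hγi, ht.trans ((mem_maxFace.1 hγ).2 α hα)⟩
  · obtain ⟨γ₁, hγ₁, hγ₁i⟩ := hM.exists_mem_maxFace_of_subset hA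
      (singleton_subset_iff.2 (mem_insert_self i S))
    have hσγ₁ : σ i ≤ γ₁ i := by simpa using (mem_maxFace.1 hγ₁i).2 σ hσ
    obtain ⟨γ, hγ, hγi⟩ := (hM.mconvex_maxFace _).exists_apply_eq hγ₁ hβ hβσ hσγ₁
    obtain ⟨α, hα, ht⟩ := hinsert
    have := ht.trans ((mem_maxFace.1 hγ).2 α hα)
    rw [sum_insert hiS, hγi] at this
    exact ⟨γ, (mem_maxFace.1 hγ).1, hγi, by omega⟩

theorem mem_of_forall_exists_sum_le (hM : MConvex A) {x : Fin n → ℤ}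
    (hdeg : ∀ α ∈ A, ∑ k, α k = ∑ k, x k) (hx : ∀ S, ∃ α ∈ A, ∑ k ∈ S, x k ≤ ∑ k ∈ S, α k) :
    x ∈ A := by
  induction A using Finset.strongInduction with
  | H A ih =>
  obtain ⟨α, hα, -⟩ := hx ∅
  by_cases hαx : α = x
  · exact hαx ▸ hα
  obtain ⟨i, hi⟩ := Function.ne_iff.1 hαx
  have hslice : ∃ σ ∈ A, σ i = x i := by
    obtain ⟨β, hβ, hβi⟩ := hx {i}
    obtain ⟨γ, hγ, hγi⟩ := hx (univ.erase i)
    have := add_sum_erase univ x (mem_univ i)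
    have := add_sum_erase univ γ (mem_univ i)
    have := hdeg γ hγ
    exact hM.exists_apply_eq hβ hγ (by omega) (by simpa using hβi)
  obtain ⟨σ, hσ, hσi⟩ := hslice
  refine (mem_filter.1 (ih {β ∈ A | β i = x i} (filter_ssubset.2 ⟨α, hα, hi⟩)
    (hM.filter_apply_eq i (x i)) (fun β hβ => hdeg β (mem_filter.1 hβ).1) fun S => ?_)).1
  have hi_erase : i ∉ S.erase i := notMem_erase i S
  obtain ⟨γ, hγ, hγi, hγS⟩ := hM.exists_apply_eq_and_le_sum hdeg hσ hi_erase (hx _) (by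
    obtain ⟨β, hβ, hβS⟩ := hx (insert i (S.erase i))
    rw [sum_insert hi_erase, ← hσi, add_comm] at hβS
    exact ⟨β, hβ, hβS⟩)
  refine ⟨γ, mem_filter.2 ⟨hγ, hγi.trans hσi⟩, ?_⟩
  by_cases hiS : i ∈ S
  · rw [← add_sum_erase S x hiS, ← add_sum_erase S γ hiS, hγi, hσi]
    omega
  · rwa [erase_eq_of_notMem hiS] at hγS

theorem mem_maxFace_superlevel_of_isMax (hM : MConvex A) {w : Fin n → ℝ} {α : Fin n → ℤ}
    (hα : α ∈ A) (hmax : ∀ β ∈ A, ∑ k, w k * (β k : ℝ) ≤ ∑ k, w k * (α k : ℝ)) (θ : ℝ) :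
    α ∈ maxFace A {k | θ ≤ w k} := by
  refine mem_maxFace.2 ⟨hα, fun β hβ => not_lt.1 fun hlt => ?_⟩
  obtain ⟨i, hi, j, hj, hα'⟩ := hM.exists_add_single_sub_single_mem hα hβ hlt
  have := hmax _ hα'
  rw [sum_mul_add_single_sub_single] at this
  simp only [mem_filter, mem_univ, true_and, not_le] at hi hj
  linarith

theorem sum_mul_le_of_isMax (hM : MConvex A) (hA : A.Nonempty) {w : Fin n → ℝ}
    {α : Fin n → ℤ} (hα : α ∈ A) (hmax : ∀ β ∈ A, ∑ k, w k * (β k : ℝ) ≤ ∑ k, w k * (α k : ℝ))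
    {x : Fin n → ℝ} (hx : ∀ S, ∑ k ∈ S, x k ≤ rhoOf A hA S) (hsum : ∑ k, x k = ∑ k, (α k : ℝ)) :
    ∑ k, w k * x k ≤ ∑ k, w k * (α k : ℝ) := by
  obtain ⟨c, hc⟩ := (Set.finite_range w).bddBelow
  have hlevel : ∀ θ, c < θ → ∑ k with θ ≤ w k, (x k - α k) ≤ 0 := fun θ _ => by
    have hρ := rhoOf_eq_of_mem_maxFace hA (hM.mem_maxFace_superlevel_of_isMax hα hmax θ)
    have := hx {k | θ ≤ w k}
    rw [hρ, Int.cast_sum] at this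
    rw [sum_sub_distrib]
    linarith
  have := sum_sub_mul_nonpos_of_sum_superlevel_nonpos w (fun k => x k - α k) univ
    (fun k _ => hc ⟨k, rfl⟩) hlevel
  have hshift : ∑ k, w k * x k - ∑ k, w k * (α k : ℝ)
      = ∑ k, (w k - c) * (x k - α k) + c * (∑ k, x k - ∑ k, (α k : ℝ)) := by
    rw [mul_sub, mul_sum, mul_sum, ← sum_sub_distrib, ← sum_sub_distrib, ← sum_add_distrib]
    exact sum_congr rfl fun k _ => by ring
  rw [hsum, sub_self, mul_zero, add_zero] at hshift
  linarith

theorem mem_convexHull_of_forall_sum_le (hM : MConvex A) (hA : A.Nonempty) {d : ℤ}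
    (hdeg : ∀ α ∈ A, ∑ k, α k = d) {x : Fin n → ℝ} (hx : ∀ S, ∑ k ∈ S, x k ≤ rhoOf A hA S)
    (hsum : ∑ k, x k = d) :
    x ∈ convexHull ℝ ((fun (α : Fin n → ℤ) (k : Fin n) => (α k : ℝ)) '' ↑A) := by
  by_contra hxA
  obtain ⟨f, u, hfA, hfx⟩ := geometric_hahn_banach_closed_point (convex_convexHull ℝ _)
    ((A.finite_toSet.image _).isClosed_convexHull ℝ) hxA
  set w : Fin n → ℝ := fun k => f (Pi.single k 1)
  have hf : ∀ y, f y = ∑ k, w k * y k := fun y => by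
    rw [← f.coe_coe, LinearMap.pi_apply_eq_sum_univ]
    refine sum_congr rfl fun k _ => ?_
    have hδ : (fun j => if k = j then (1 : ℝ) else 0) = Pi.single k 1 := by
      ext j; simp [Pi.single_apply, eq_comm]
    rw [smul_eq_mul, mul_comm, f.coe_coe, hδ]
  obtain ⟨α, hα, hmax⟩ := A.exists_max_image (fun α => ∑ k, w k * (α k : ℝ)) hA
  have hαx := hM.sum_mul_le_of_isMax hA hα hmax hx (by rw [hsum, ← hdeg α hα]; push_cast; rfl)
  have := hfA _ (subset_convexHull ℝ _ ⟨α, hα, rfl⟩)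
  rw [hf] at this hfx
  linarith

end MConvex

/-- Let `A ⊆ (ℤ_{≥0})ⁿ` be a nonempty finite M-convex set of vectors of coordinate sum
`d` and `ρ(S) = max_{α∈A} ∑_{i∈S} α_i`.  Then the convex hull of `A` in `ℝⁿ` is the
base polytope `B(ρ)`, and `A = B(ρ) ∩ ℤⁿ`. -/
theorem convexHull_eq_basePolytope {n : ℕ} (d : ℕ)
    (A : Finset (Fin n → ℤ)) (hA : A.Nonempty)
    (hpos : ∀ α ∈ A, ∀ i, 0 ≤ α i)
    (hdeg : ∀ α ∈ A, ∑ i, α i = (d : ℤ))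
    (hM : MConvex A) :
    convexHull ℝ ((fun (α : Fin n → ℤ) (i : Fin n) => (α i : ℝ)) '' ↑A) =
        {x : Fin n → ℝ | (∀ i, 0 ≤ x i) ∧
          (∀ S : Finset (Fin n), ∑ i ∈ S, x i ≤ (rhoOf A hA S : ℝ)) ∧
          ∑ i, x i = (d : ℝ)} ∧
      ∀ α : Fin n → ℤ, α ∈ A ↔
        ((∀ i, 0 ≤ α i) ∧
          (∀ S : Finset (Fin n), ∑ i ∈ S, α i ≤ rhoOf A hA S) ∧
          ∑ i, α i = (d : ℤ)) := by
  have hmem : ∀ α ∈ A, (∀ i, 0 ≤ α i) ∧ (∀ S : Finset (Fin n), ∑ i ∈ S, α i ≤ rhoOf A hA S) ∧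
      ∑ i, α i = (d : ℤ) := fun α hα => ⟨hpos α hα, fun S => le_sup' _ hα, hdeg α hα⟩
  refine ⟨(convexHull_min ?_ (convex_basePolytope_s11 _ _)).antisymm ?_, fun α => ⟨hmem α, ?_⟩⟩
  · rintro _ ⟨α, hα, rfl⟩
    obtain ⟨h0, hS, hd⟩ := hmem α hα
    simp only [Set.mem_ofPred_eq]
    exact ⟨fun i => by exact_mod_cast h0 i, fun S => by exact_mod_cast hS S, by exact_mod_cast hd⟩
  · rintro x ⟨-, hxS, hxd⟩
    exact hM.mem_convexHull_of_forall_sum_le hA hdeg hxS (by exact_mod_cast hxd)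
  · rintro ⟨-, hαS, hαd⟩
    exact hM.mem_of_forall_exists_sum_le (fun β hβ => (hdeg β hβ).trans hαd.symm)
      fun S => (le_sup'_iff hA).1 (hαS S)
end

section
/- Let h ∈ ℝ[x₁,…,xₙ] be a nonzero homogeneous polynomial all of whose coefficients are nonnegative, let e ∈ ℝ^n have all entries strictly positive, and let S ⊆ [n]. Then the degree of the univariate polynomial p(t) = h(e + t·Σ_{i∈S} δᵢ) equals max_{α ∈ supp(h)} Σ_{i∈S} αᵢ, where supp(h) ⊆ (ℤ_{≥0})^n is the set of exponent vectors of monomials occurring in h and δᵢ is the i-th standard unit vector of ℝ^n. -/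
/-!
Expanding `h` into monomials, `x^α` contributes `h_α · ∏ᵢ gᵢ^{αᵢ}` with `gᵢ = eᵢ + [i ∈ S] t`,
a polynomial in `t` of degree `Σ_{i∈S} αᵢ` whose leading coefficient is positive. As the `h_α`
are nonnegative, the top coefficients of these terms cannot cancel, so the degree of the sum is
the largest of their degrees.
-/

open MvPolynomial

namespace Polynomial

variable {R : Type*} [Semiring R]

theorem coeff_nonneg_of_natDegree_le [PartialOrder R] {q : R[X]} {D : ℕ}
    (hq : 0 ≤ q.leadingCoeff) (hD : q.natDegree ≤ D) : 0 ≤ q.coeff D := by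
  rcases hD.lt_or_eq with hlt | rfl
  · rw [coeff_eq_zero_of_natDegree_lt hlt]
  · exact hq

theorem leadingCoeff_C_add_ite_X_pos [PartialOrder R] [IsStrictOrderedRing R] {c : R}
    (hc : 0 < c) (P : Prop) [Decidable P] : 0 < (C c + if P then X else 0).leadingCoeff := by
  split_ifs
  · simp [add_comm (C c), leadingCoeff_X_add_C]
  · simpa using hc

theorem natDegree_C_add_ite_X [Nontrivial R] (c : R) (P : Prop) [Decidable P] :
    (C c + if P then X else 0).natDegree = if P then 1 else 0 := by
  split_ifs <;> simp [add_comm (C c)]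

end Polynomial

section

variable {σ R : Type*} [CommSemiring R] [PartialOrder R] [IsStrictOrderedRing R]
  {g : σ → Polynomial R}

theorem prod_leadingCoeff_pow_pos (hg : ∀ i, 0 < (g i).leadingCoeff) (m : σ →₀ ℕ) :
    0 < ∏ i ∈ m.support, (g i ^ m i).leadingCoeff :=
  Finset.prod_pos fun i _ =>
    Polynomial.leadingCoeff_pow' (pow_pos (hg i) _).ne' ▸ pow_pos (hg i) _

theorem leadingCoeff_prod_pow_pos (hg : ∀ i, 0 < (g i).leadingCoeff) (m : σ →₀ ℕ) :
    0 < (∏ i ∈ m.support, g i ^ m i).leadingCoeff := by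
  rw [Polynomial.leadingCoeff_prod' _ _ (prod_leadingCoeff_pow_pos hg m).ne']
  exact prod_leadingCoeff_pow_pos hg m

theorem natDegree_prod_pow (hg : ∀ i, 0 < (g i).leadingCoeff) (m : σ →₀ ℕ) :
    (∏ i ∈ m.support, g i ^ m i).natDegree = Finsupp.weight (fun i => (g i).natDegree) m := by
  rw [Polynomial.natDegree_prod' _ _ (prod_leadingCoeff_pow_pos hg m).ne',
    Finsupp.weight_apply, Finsupp.sum]
  refine Finset.sum_congr rfl fun i _ => ?_
  rw [Polynomial.natDegree_pow' (pow_pos (hg i) _).ne', smul_eq_mul]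

theorem natDegree_aeval_eq_weightedTotalDegree (hg : ∀ i, 0 < (g i).leadingCoeff)
    (p : MvPolynomial σ R) (hp : ∀ m, 0 ≤ p.coeff m) :
    (aeval g p).natDegree = weightedTotalDegree (fun i => (g i).natDegree) p := by
  set w : σ → ℕ := fun i => (g i).natDegree
  set D := weightedTotalDegree w p
  have hweight : ∀ m ∈ p.support, Finsupp.weight w m ≤ D := fun m hm =>
    Finset.le_sup (f := fun s => Finsupp.weight w s) hm
  rw [aeval_def, eval₂_eq, Polynomial.algebraMap_eq]
  refine le_antisymm ?_ ?_
  · refine Polynomial.natDegree_sum_le_of_forall_le _ _ fun m hm => ?_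
    exact (Polynomial.natDegree_C_mul_le _ _).trans (natDegree_prod_pow hg m ▸ hweight m hm)
  rcases p.support.eq_empty_or_nonempty with hempty | hne
  · simp [D, weightedTotalDegree, hempty]
  obtain ⟨m₀, hm₀, hm₀D⟩ : ∃ m₀ ∈ p.support, D = Finsupp.weight w m₀ :=
    Finset.exists_mem_eq_sup _ hne fun s => Finsupp.weight w s
  refine Polynomial.le_natDegree_of_ne_zero (ne_of_gt ?_)
  rw [Polynomial.finsetSum_coeff]
  refine Finset.sum_pos' (fun m hm => ?_) ⟨m₀, hm₀, ?_⟩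
  · rw [Polynomial.coeff_C_mul]
    exact mul_nonneg (hp m) (Polynomial.coeff_nonneg_of_natDegree_le
      (leadingCoeff_prod_pow_pos hg m).le (natDegree_prod_pow hg m ▸ hweight m hm))
  · rw [Polynomial.coeff_C_mul, hm₀D, ← natDegree_prod_pow hg m₀]
    exact mul_pos ((hp m₀).lt_of_ne' (mem_support_iff.mp hm₀))
      (leadingCoeff_prod_pow_pos hg m₀)

end

theorem natDegree_eval_direction_general {n : ℕ} (h : MvPolynomial (Fin n) ℝ)
    (hcoeff : ∀ m, 0 ≤ h.coeff m)
    (e : Fin n → ℝ) (he : ∀ i, 0 < e i) (S : Finset (Fin n)) :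
    (MvPolynomial.aeval
        (fun i : Fin n =>
          Polynomial.C (e i) + if i ∈ S then (Polynomial.X : Polynomial ℝ) else 0)
        h).natDegree =
      h.support.sup fun m => ∑ i ∈ S, m i := by
  rw [natDegree_aeval_eq_weightedTotalDegree
    (fun i => Polynomial.leadingCoeff_C_add_ite_X_pos (he i) _) h hcoeff]
  simp only [Polynomial.natDegree_C_add_ite_X]
  refine Finset.sup_congr rfl fun m _ => ?_
  simp [Finsupp.weight_eq_sum, Finset.sum_ite_mem]

/-- Let `h ∈ ℝ[x₁,…,xₙ]` be a nonzero homogeneous polynomial with nonnegative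
coefficients, let `e ∈ ℝⁿ` be entrywise positive and `S ⊆ [n]`.  Then the degree of
the univariate polynomial `p(t) = h(e + t·Σ_{i∈S} δᵢ)` equals
`max_{α ∈ supp h} Σ_{i∈S} α_i`. -/
theorem natDegree_eval_direction {n d : ℕ} (h : MvPolynomial (Fin n) ℝ)
    (hne : h ≠ 0) (hhom : h.IsHomogeneous d)
    (hcoeff : ∀ m, 0 ≤ h.coeff m)
    (e : Fin n → ℝ) (he : ∀ i, 0 < e i) (S : Finset (Fin n)) :
    (MvPolynomial.aeval
        (fun i : Fin n =>
          Polynomial.C (e i) + if i ∈ S then (Polynomial.X : Polynomial ℝ) else 0)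
        h).natDegree =
      h.support.sup fun m => ∑ i ∈ S, m i :=
  natDegree_eval_direction_general h hcoeff e he S
end
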